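/- arXiv:1706.03208 — 11 statements merged into one kernel-verified Lean document; each statement's English description precedes it below -/
import Mathlib

section
/- Let A and B be finite automata over the same finite alphabet Σ with disjoint state sets, and let ≼ be a binary relation on the states of the union automaton A∪B such that x ≼ y implies L_{A∪B}(x) ⊆ L_{A∪B}(y). Let (p, P) and (r, R) be product-states, where p, r are states of A and P, R are macro-states of B. If p ≼ r and for every r' ∈ R there exists p' ∈ P with r' ≼ p' (written R ≼^∀∃ P), then L_{A,B}(p, P) ⊆ L_{A,B}(r, R). -/
/-- A finite automaton over alphabet `σ` with states `Q`. -/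
structure FA (σ Q : Type*) where
  δ : Set (Q × σ × Q)
  I : Set Q
  F : Set Q

/-- `A.Accepts p w` : there is a run of `A` on `w` from state `p` ending in a final state. -/
def FA.Accepts {σ Q : Type*} (A : FA σ Q) : Q → List σ → Prop
  | p, [] => p ∈ A.F
  | p, a :: w => ∃ q, (p, a, q) ∈ A.δ ∧ FA.Accepts A q w

/-- The language of a state. -/
def FA.Lang {σ Q : Type*} (A : FA σ Q) (p : Q) : Set (List σ) :=
  {w | A.Accepts p w}

/-- The language of a macro-state. -/
def FA.MacroLang {σ Q : Type*} (A : FA σ Q) (P : Set Q) : Set (List σ) :=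
  ⋃ p ∈ P, A.Lang p

/-- The union automaton of two automata with (forcibly) disjoint state sets. -/
def FA.union {σ Q₁ Q₂ : Type*} (A : FA σ Q₁) (B : FA σ Q₂) : FA σ (Q₁ ⊕ Q₂) where
  δ := {t | (∃ p a q, (p, a, q) ∈ A.δ ∧ t = (Sum.inl p, a, Sum.inl q)) ∨
            (∃ p a q, (p, a, q) ∈ B.δ ∧ t = (Sum.inr p, a, Sum.inr q))}
  I := Sum.inl '' A.I ∪ Sum.inr '' B.I
  F := Sum.inl '' A.F ∪ Sum.inr '' B.F

lemma union_inl {σ Q₁ Q₂ : Type*} (A : FA σ Q₁) (B : FA σ Q₂) (w : List σ) :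
    ∀ p, (A.union B).Accepts (Sum.inl p) w ↔ A.Accepts p w := by
  induction w with
  | nil =>
    intro p
    simp [FA.Accepts, FA.union]
  | cons a w ih =>
    intro p
    constructor
    · rintro ⟨q, hq, hacc⟩
      rcases hq with ⟨p', a', q', h, heq⟩ | ⟨p', a', q', h, heq⟩
      · injection heq with h1 h23
        injection h23 with h2 h3
        injection h1 with h1
        subst h1; subst h2; subst h3
        exact ⟨q', h, (ih _).1 hacc⟩
      · simp [Prod.ext_iff] at heq
    · rintro ⟨q, hq, hacc⟩
      exact ⟨Sum.inl q, Or.inl ⟨p, a, q, hq, rfl⟩, (ih q).2 hacc⟩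

lemma union_inr {σ Q₁ Q₂ : Type*} (A : FA σ Q₁) (B : FA σ Q₂) (w : List σ) :
    ∀ p, (A.union B).Accepts (Sum.inr p) w ↔ B.Accepts p w := by
  induction w with
  | nil =>
    intro p
    simp [FA.Accepts, FA.union]
  | cons a w ih =>
    intro p
    constructor
    · rintro ⟨q, hq, hacc⟩
      rcases hq with ⟨p', a', q', h, heq⟩ | ⟨p', a', q', h, heq⟩
      · simp [Prod.ext_iff] at heq
      · injection heq with h1 h23
        injection h23 with h2 h3
        injection h1 with h1
        subst h1; subst h2; subst h3
        exact ⟨q', h, (ih _).1 hacc⟩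
    · rintro ⟨q, hq, hacc⟩
      exact ⟨Sum.inr q, Or.inr ⟨p, a, q, hq, rfl⟩, (ih q).2 hacc⟩

/-- The language of a product-state `(p, P)` is `L_A(p) \ L_B(P)`.  If `≼` implies
language inclusion on the union automaton, `p ≼ r` and `R ≼^∀∃ P`, then
`L_{A,B}(p, P) ⊆ L_{A,B}(r, R)`. -/
theorem stmt_2 {σ Q₁ Q₂ : Type*} [Finite σ] [Finite Q₁] [Finite Q₂]
    (A : FA σ Q₁) (B : FA σ Q₂)
    (pre : Q₁ ⊕ Q₂ → Q₁ ⊕ Q₂ → Prop)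
    (hpre : ∀ x y, pre x y → (A.union B).Lang x ⊆ (A.union B).Lang y)
    (p r : Q₁) (P R : Set Q₂)
    (hpr : pre (Sum.inl p) (Sum.inl r))
    (hRP : ∀ r' ∈ R, ∃ p' ∈ P, pre (Sum.inr r') (Sum.inr p')) :
    A.Lang p \ B.MacroLang P ⊆ A.Lang r \ B.MacroLang R := by
  rintro w ⟨hw, hnP⟩
  constructor
  · have := hpre _ _ hpr (show w ∈ (A.union B).Lang (Sum.inl p) from
      (union_inl A B w p).2 hw)
    exact (union_inl A B w r).1 this
  · rintro ⟨S, ⟨r', rfl⟩, hS⟩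
    simp only [Set.mem_iUnion] at hS
    obtain ⟨hr', hw'⟩ := hS
    obtain ⟨p', hp'P, hpre'⟩ := hRP r' hr'
    refine hnP ?_
    have := hpre _ _ hpre' (show w ∈ (A.union B).Lang (Sum.inr r') from
      (union_inr A B w r').2 hw')
    exact Set.mem_biUnion hp'P ((union_inr A B w p').1 this)
end

section
/- Let A = (Σ, Q, Δ, F) be a finite bottom-up tree automaton and let ≼ be a transitive upward simulation on A (in particular, the maximal upward simulation). Then for all n and all tuples of states (q_1,…,q_n) and (r_1,…,r_n) with q_i ≼ r_i for every i, L^□(A)(q_1,…,q_n) ⊆ L^□(A)(r_1,…,r_n). -/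
/-- A bottom-up finite tree automaton over ranked alphabet `σ` (with arity function `ar`)
and states `Q`.  `Δ a f q` means `(f 0, …, f (ar a - 1)) →a q` is a transition rule. -/
structure TA (σ : Type*) (ar : σ → ℕ) (Q : Type*) where
  Δ : ∀ a : σ, (Fin (ar a) → Q) → Q → Prop
  F : Set Q

/-- Contexts: trees over `σ ∪ {□}`. -/
inductive CTree (σ : Type*) (ar : σ → ℕ) : Type _
  | hole : CTree σ ar
  | node (a : σ) (c : Fin (ar a) → CTree σ ar) : CTree σ ar

/-- The number of holes (□-leaves) of a context. -/
def CTree.holes {σ : Type*} {ar : σ → ℕ} : CTree σ ar → ℕ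
  | .hole => 1
  | .node _ c => ∑ i, (c i).holes

/-- Every leaf of the context is a hole (no rank-0 symbol of `σ` occurs). -/
def CTree.proper {σ : Type*} {ar : σ → ℕ} : CTree σ ar → Prop
  | .hole => True
  | .node a c => ar a ≠ 0 ∧ ∀ i, (c i).proper

/-- `CEval A t qs q` : placing the states `qs` into the holes of `t` in left-to-right
order, `A` can evaluate the context `t` to state `q`; written `t(q_1,…,q_n) ⇒ q`. -/
inductive CEval {σ Q : Type*} {ar : σ → ℕ} (A : TA σ ar Q) : CTree σ ar → List Q → Q → Prop
  | hole (q : Q) : CEval A .hole [q] q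
  | node (a : σ) (c : Fin (ar a) → CTree σ ar) (qs : Fin (ar a) → List Q)
      (cq : Fin (ar a) → Q) (q : Q)
      (hc : ∀ i, CEval A (c i) (qs i) (cq i)) (hq : A.Δ a cq q) :
      CEval A (.node a c) (List.ofFn qs).flatten q

/-- `L^□(A)(q_1,…,q_n)` : the contexts with `n` holes accepted from the state tuple. -/
def LsqS {σ Q : Type*} {ar : σ → ℕ} (A : TA σ ar Q) (qs : List Q) : Set (CTree σ ar) :=
  {t | t.proper ∧ t.holes = qs.length ∧ ∃ q ∈ A.F, CEval A t qs q}

/-- `L^□(A)(P_1,…,P_n)` for a tuple of macro-states. -/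
def LsqM {σ Q : Type*} {ar : σ → ℕ} (A : TA σ ar Q) (Ps : List (Set Q)) :
    Set (CTree σ ar) :=
  {t | ∃ qs : List Q, List.Forall₂ (· ∈ ·) qs Ps ∧ t ∈ LsqS A qs}


/-- An upward simulation on the tree automaton `A`. -/
def UpSim {σ Q : Type*} {ar : σ → ℕ} (A : TA σ ar Q) (pre : Q → Q → Prop) : Prop :=
  (∀ q r, pre q r → q ∈ A.F → r ∈ A.F) ∧
  ∀ q r, pre q r → ∀ (a : σ) (f : Fin (ar a) → Q) (i : Fin (ar a)) (q' : Q),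
    f i = q → A.Δ a f q' →
    ∃ r', A.Δ a (Function.update f i r) r' ∧ pre q' r'

lemma forall₂_append_decomp {α β : Type*} {R : α → β → Prop} :
    ∀ (l₁ l₂ : List α) (rs : List β), List.Forall₂ R (l₁ ++ l₂) rs →
      ∃ r₁ r₂, rs = r₁ ++ r₂ ∧ List.Forall₂ R l₁ r₁ ∧ List.Forall₂ R l₂ r₂ := by
  intro l₁
  induction l₁ with
  | nil => intro l₂ rs h; exact ⟨[], rs, rfl, List.Forall₂.nil, h⟩
  | cons a l ih =>
    intro l₂ rs h
    cases h with
    | cons hab h' =>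
      obtain ⟨r₁, r₂, rfl, h1, h2⟩ := ih l₂ _ h'
      exact ⟨_ :: r₁, r₂, rfl, List.Forall₂.cons hab h1, h2⟩

lemma flatten_forall₂_decomp {α β : Type*} {R : α → β → Prop} :
    ∀ (L : List (List α)) (rs : List β), List.Forall₂ R L.flatten rs →
      ∃ Ls : List (List β), rs = Ls.flatten ∧ List.Forall₂ (List.Forall₂ R) L Ls := by
  intro L
  induction L with
  | nil => intro rs h; simp at h; exact ⟨[], by simp [h], by simp [h]⟩
  | cons l L ih =>
    intro rs h
    rw [List.flatten_cons] at h
    obtain ⟨r1, r2, rfl, h1, h2⟩ := forall₂_append_decomp _ _ _ h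
    obtain ⟨Ls, rfl, hLs⟩ := ih r2 h2
    exact ⟨r1 :: Ls, by simp, List.Forall₂.cons h1 hLs⟩
section Aux
variable {σ Q : Type*} {ar : σ → ℕ} (A : TA σ ar Q) (pre : Q → Q → Prop)

lemma rule_lift (htrans : Transitive pre) (hsim : UpSim A pre) (a : σ) (f g : Fin (ar a) → Q) (q : Q) (hΔ : A.Δ a f q)
    (hfg : ∀ i, pre (f i) (g i) ∨ f i = g i) :
    ∃ r, A.Δ a g r ∧ (pre q r ∨ q = r) := by
  suffices H : ∀ k, k ≤ ar a →
      ∃ r, A.Δ a (fun j => if (j : ℕ) < k then g j else f j) r ∧ (pre q r ∨ q = r) by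
    obtain ⟨r, hr, hp⟩ := H (ar a) le_rfl
    have hg : (fun j : Fin (ar a) => if (j : ℕ) < ar a then g j else f j) = g :=
      funext fun j => if_pos j.isLt
    rw [hg] at hr; exact ⟨r, hr, hp⟩
  intro k
  induction k with
  | zero =>
    intro _
    have hf : (fun j : Fin (ar a) => if (j : ℕ) < 0 then g j else f j) = f :=
      funext fun j => if_neg (Nat.not_lt_zero _)
    exact ⟨q, by rw [hf]; exact hΔ, Or.inr rfl⟩
  | succ k ih =>
    intro hk
    obtain ⟨r, hr, hp⟩ := ih (Nat.le_of_succ_le hk)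
    set i : Fin (ar a) := ⟨k, hk⟩ with hidef
    have hupd : Function.update (fun j : Fin (ar a) => if (j : ℕ) < k then g j else f j) i (g i)
        = fun j : Fin (ar a) => if (j : ℕ) < k + 1 then g j else f j := by
      funext j
      rcases eq_or_ne j i with rfl | hne
      · simp [Function.update_self, hidef]
      · rw [Function.update_of_ne hne]
        have hjk : (j : ℕ) ≠ k := fun hh => hne (Fin.ext hh)
        by_cases hlt : (j : ℕ) < k
        · rw [if_pos hlt, if_pos (Nat.lt_succ_of_lt hlt)]
        · rw [if_neg hlt, if_neg (by omega)]
    have hi : (fun j : Fin (ar a) => if (j : ℕ) < k then g j else f j) i = f i := by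
      simp [hidef]
    rcases hfg i with hpre | heq
    · obtain ⟨r', hΔ', hpr'⟩ := hsim.2 (f i) (g i) hpre a _ i r hi hr
      rw [hupd] at hΔ'
      refine ⟨r', hΔ', Or.inl ?_⟩
      rcases hp with h | rfl
      · exact htrans h hpr'
      · exact hpr'
    · refine ⟨r, ?_, hp⟩
      rw [← hupd, ← heq, ← hi, Function.update_eq_self]
      exact hr

lemma ceval_lift (htrans : Transitive pre) (hsim : UpSim A pre) {t : CTree σ ar} {qs : List Q} {q : Q} (h : CEval A t qs q) :
    ∀ rs, List.Forall₂ (fun x y => pre x y ∨ x = y) qs rs →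
      ∃ r, CEval A t rs r ∧ (pre q r ∨ q = r) := by
  induction h with
  | hole q =>
    intro rs hr
    cases hr with
    | cons hxy h' => cases h'; exact ⟨_, CEval.hole _, hxy⟩
  | node a c qs cq q hc hΔ ih =>
    intro rs hr
    obtain ⟨Ls, rfl, hLs⟩ := flatten_forall₂_decomp _ _ hr
    have hlen : Ls.length = ar a := by
      have := hLs.length_eq; simpa using this.symm
    set rss : Fin (ar a) → List Q := fun i => Ls.get (Fin.cast hlen.symm i) with hrss
    have hLs' : Ls = List.ofFn rss := by
      apply List.ext_get
      · simp [hlen]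
      · intro n h1 h2
        simp only [List.get_eq_getElem, List.getElem_ofFn]
        simp [hrss]
    have hforall : ∀ i, List.Forall₂ (fun x y => pre x y ∨ x = y) (qs i) (rss i) := by
      intro i
      rw [List.forall₂_iff_get] at hLs
      obtain ⟨hl, hget⟩ := hLs
      have := hget i (by simp) (by simp [hlen])
      simpa [hrss] using this
    have hch : ∀ i, ∃ r, CEval A (c i) (rss i) r ∧ (pre (cq i) r ∨ cq i = r) :=
      fun i => ih i (rss i) (hforall i)
    choose cr hcr hpre using hch
    obtain ⟨r, hΔ', hqr⟩ := rule_lift A pre htrans hsim a cq cr q hΔ hpre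
    exact ⟨r, by rw [hLs']; exact CEval.node a c rss cr r hcr hΔ', hqr⟩

end Aux

/-- A transitive upward simulation implies inclusion of the context languages of
componentwise related tuples of states. -/
theorem stmt_4 {σ Q : Type*} [Finite σ] [Finite Q] {ar : σ → ℕ} (A : TA σ ar Q)
    (pre : Q → Q → Prop) (htrans : Transitive pre) (hsim : UpSim A pre)
    (qs rs : List Q) (h : List.Forall₂ pre qs rs) :
    LsqS A qs ⊆ LsqS A rs := by
  intro t ht
  obtain ⟨hp, hh, q, hqF, hev⟩ := ht
  have h' : List.Forall₂ (fun x y => pre x y ∨ x = y) qs rs :=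
    h.imp fun {a b} hxy => Or.inl hxy
  obtain ⟨r, hev', hqr⟩ := ceval_lift A pre htrans hsim hev rs h'
  refine ⟨hp, ?_, r, ?_, hev'⟩
  · rw [hh, h.length_eq]
  · rcases hqr with hqr | rfl
    · exact hsim.1 q r hqr hqF
    · exact hqF
end

section
/- Let A be a finite bottom-up tree automaton and let ≼ be a relation on its states such that componentwise ≼-related tuples of states have inclusion-related context languages (i.e., q_i ≼ r_i for all i implies L^□(A)(q_1,…,q_n) ⊆ L^□(A)(r_1,…,r_n)). Then for tuples of macro-states (P_1,…,P_n) and (R_1,…,R_n), if R_i ≼^∀∃ P_i for every i (for every r ∈ R_i there is p ∈ P_i with r ≼ p), then L^□(A)(R_1,…,R_n) ⊆ L^□(A)(P_1,…,P_n). -/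
/-- If componentwise `≼`-related tuples of states have inclusion-related context
languages, then tuples of macro-states related by componentwise `≼^∀∃` have
inclusion-related context languages. -/
theorem stmt_5 {σ Q : Type*} [Finite σ] [Finite Q] {ar : σ → ℕ} (A : TA σ ar Q)
    (pre : Q → Q → Prop)
    (hpre : ∀ qs rs : List Q, List.Forall₂ pre qs rs → LsqS A qs ⊆ LsqS A rs)
    (Ps Rs : List (Set Q))
    (h : List.Forall₂ (fun R P => ∀ r ∈ R, ∃ p ∈ P, pre r p) Rs Ps) :
    LsqM A Rs ⊆ LsqM A Ps := by
  rintro t ⟨qs, hqs, ht⟩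
  obtain ⟨ps, hps, hrel⟩ : ∃ ps : List Q, List.Forall₂ (· ∈ ·) ps Ps ∧ List.Forall₂ pre qs ps := by
    clear ht
    induction h generalizing qs with
    | nil =>
      cases hqs
      exact ⟨[], .nil, .nil⟩
    | cons hrp _ ih =>
      rcases hqs with _ | ⟨hq, hqs'⟩
      obtain ⟨ps, h1, h2⟩ := ih _ hqs'
      obtain ⟨p, hp, hpre'⟩ := hrp _ hq
      exact ⟨p :: ps, .cons hp h1, .cons hpre' h2⟩
  exact ⟨ps, hps, hpre qs ps hrel ht⟩
end

section
/- Let A and B be finite bottom-up tree automata over the same ranked alphabet Σ with disjoint state sets, and let ≼ be a relation on the states of the union automaton A∪B such that componentwise ≼-related tuples of states have inclusion-related context languages in A∪B. Let (p_1,…,p_n) and (r_1,…,r_n) be tuples of states of A with p_i ≼ r_i for all i, and let (P_1,…,P_n), (R_1,…,R_n) be tuples of macro-states of B with R_i ≼^∀∃ P_i for all i (for every r ∈ R_i there is p ∈ P_i with r ≼ p). Then L^□(A,B)((p_1,P_1),…,(p_n,P_n)) ⊆ L^□(A,B)((r_1,R_1),…,(r_n,R_n)). -/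
/-- The union automaton of two tree automata with (forcibly) disjoint state sets. -/
def TA.union {σ Q₁ Q₂ : Type*} {ar : σ → ℕ} (A : TA σ ar Q₁) (B : TA σ ar Q₂) :
    TA σ ar (Q₁ ⊕ Q₂) where
  Δ := fun a f q =>
    (∃ g q', A.Δ a g q' ∧ f = (fun i => Sum.inl (g i)) ∧ q = Sum.inl q') ∨
    (∃ g q', B.Δ a g q' ∧ f = (fun i => Sum.inr (g i)) ∧ q = Sum.inr q')
  F := Sum.inl '' A.F ∪ Sum.inr '' B.F

section Aux

variable {σ Q₁ Q₂ : Type*} {ar : σ → ℕ} (A : TA σ ar Q₁) (B : TA σ ar Q₂)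

lemma CTree.proper.holes_pos {t : CTree σ ar} (h : t.proper) : 0 < t.holes := by
  induction t with
  | hole => exact Nat.one_pos
  | node a c ih =>
    obtain ⟨ha, hc⟩ := h
    have : Nonempty (Fin (ar a)) := ⟨⟨0, Nat.pos_of_ne_zero ha⟩⟩
    exact Finset.sum_pos (fun i _ => ih i (hc i)) Finset.univ_nonempty

lemma ceval_union_inl {t : CTree σ ar} {qs : List Q₁} {q : Q₁}
    (h : CEval A t qs q) :
    CEval (A.union B) t (qs.map Sum.inl) (Sum.inl q) := by
  induction h with
  | hole q => exact CEval.hole _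
  | node a c qs cq q hc hq ih =>
    have he : (List.ofFn qs).flatten.map (Sum.inl : Q₁ → Q₁ ⊕ Q₂)
        = (List.ofFn fun i => (qs i).map Sum.inl).flatten := by
      rw [List.map_flatten, List.map_ofFn]; rfl
    rw [he]
    exact CEval.node a c _ (fun i => Sum.inl (cq i)) _ ih
      (Or.inl ⟨cq, q, hq, rfl, rfl⟩)

lemma ceval_union_inr {t : CTree σ ar} {qs : List Q₂} {q : Q₂}
    (h : CEval B t qs q) :
    CEval (A.union B) t (qs.map Sum.inr) (Sum.inr q) := by
  induction h with
  | hole q => exact CEval.hole _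
  | node a c qs cq q hc hq ih =>
    have he : (List.ofFn qs).flatten.map (Sum.inr : Q₂ → Q₁ ⊕ Q₂)
        = (List.ofFn fun i => (qs i).map Sum.inr).flatten := by
      rw [List.map_flatten, List.map_ofFn]; rfl
    rw [he]
    exact CEval.node a c _ (fun i => Sum.inr (cq i)) _ ih
      (Or.inr ⟨cq, q, hq, rfl, rfl⟩)

lemma ceval_union_inl_rev {t : CTree σ ar} {qs' : List (Q₁ ⊕ Q₂)} {r : Q₁ ⊕ Q₂}
    (h : CEval (A.union B) t qs' r) :
    ∀ q : Q₁, r = Sum.inl q → ∃ qs : List Q₁, qs' = qs.map Sum.inl ∧ CEval A t qs q := by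
  induction h with
  | hole q =>
    rintro q' rfl
    exact ⟨[q'], rfl, CEval.hole q'⟩
  | node a c qs cq q hc hq ih =>
    rintro q' rfl
    rcases hq with ⟨g, q'', hg, hcq, hqq⟩ | ⟨g, q'', hg, hcq, hqq⟩
    · obtain rfl : q'' = q' := Sum.inl.inj hqq.symm
      choose qsA hA hB using fun i => ih i (g i) (congrFun hcq i)
      refine ⟨(List.ofFn qsA).flatten, ?_, CEval.node a c qsA g _ hB hg⟩
      rw [List.map_flatten, List.map_ofFn]
      exact congrArg List.flatten (congrArg List.ofFn (funext fun i => hA i))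
    · exact absurd hqq.symm (by simp)

lemma ceval_union_inr_rev {t : CTree σ ar} {qs' : List (Q₁ ⊕ Q₂)} {r : Q₁ ⊕ Q₂}
    (h : CEval (A.union B) t qs' r) :
    ∀ q : Q₂, r = Sum.inr q → ∃ qs : List Q₂, qs' = qs.map Sum.inr ∧ CEval B t qs q := by
  induction h with
  | hole q =>
    rintro q' rfl
    exact ⟨[q'], rfl, CEval.hole q'⟩
  | node a c qs cq q hc hq ih =>
    rintro q' rfl
    rcases hq with ⟨g, q'', hg, hcq, hqq⟩ | ⟨g, q'', hg, hcq, hqq⟩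
    · exact absurd hqq.symm (by simp)
    · obtain rfl : q'' = q' := Sum.inr.inj hqq.symm
      choose qsB hA hB using fun i => ih i (g i) (congrFun hcq i)
      refine ⟨(List.ofFn qsB).flatten, ?_, CEval.node a c qsB g _ hB hg⟩
      rw [List.map_flatten, List.map_ofFn]
      exact congrArg List.flatten (congrArg List.ofFn (funext fun i => hA i))

lemma lsqS_union_inl (qs : List Q₁) :
    LsqS (A.union B) (qs.map Sum.inl) = LsqS A qs := by
  ext t
  simp only [LsqS, Set.mem_setOf_eq, List.length_map]
  refine and_congr_right fun hp => and_congr_right fun hh => ⟨?_, ?_⟩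
  · rintro ⟨q, hqF, hev⟩
    rcases hqF with ⟨q', hq', rfl⟩ | ⟨q', hq', rfl⟩
    · obtain ⟨qs', hmap, hev'⟩ := ceval_union_inl_rev A B hev q' rfl
      obtain rfl : qs = qs' := List.map_injective_iff.2 Sum.inl_injective hmap
      exact ⟨q', hq', hev'⟩
    · obtain ⟨qs', hmap, -⟩ := ceval_union_inr_rev A B hev q' rfl
      exfalso
      have h1 : qs.length = qs'.length := by
        have := congrArg List.length hmap
        simpa using this
      cases qs with
      | nil =>
        have := hp.holes_pos
        simp at hh
        omega
      | cons x xs =>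
        cases qs' with
        | nil => simp at h1
        | cons y ys => simpa using congrArg (fun l => l.head?) hmap
  · rintro ⟨q, hqF, hev⟩
    exact ⟨Sum.inl q, Or.inl ⟨q, hqF, rfl⟩, ceval_union_inl A B hev⟩

lemma lsqS_union_inr (qs : List Q₂) :
    LsqS (A.union B) (qs.map Sum.inr) = LsqS B qs := by
  ext t
  simp only [LsqS, Set.mem_setOf_eq, List.length_map]
  refine and_congr_right fun hp => and_congr_right fun hh => ⟨?_, ?_⟩
  · rintro ⟨q, hqF, hev⟩
    rcases hqF with ⟨q', hq', rfl⟩ | ⟨q', hq', rfl⟩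
    · obtain ⟨qs', hmap, -⟩ := ceval_union_inl_rev A B hev q' rfl
      exfalso
      cases qs with
      | nil =>
        have := hp.holes_pos
        simp at hh
        omega
      | cons x xs =>
        cases qs' with
        | nil =>
          have := congrArg List.length hmap
          simp at this
        | cons y ys => simpa using congrArg (fun l => l.head?) hmap
    · obtain ⟨qs', hmap, hev'⟩ := ceval_union_inr_rev A B hev q' rfl
      obtain rfl : qs = qs' := List.map_injective_iff.2 Sum.inr_injective hmap
      exact ⟨q', hq', hev'⟩
  · rintro ⟨q, hqF, hev⟩
    exact ⟨Sum.inr q, Or.inr ⟨q, hqF, rfl⟩, ceval_union_inr A B hev⟩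

end Aux

/-- The language of a tuple of product-states is
`L^□(A)(p_1,…,p_n) \ L^□(B)(P_1,…,P_n)`.  If `≼` implies inclusion of context languages
of componentwise related tuples in `A ∪ B`, `p_i ≼ r_i` and `R_i ≼^∀∃ P_i` for all `i`,
then `L^□(A,B)((p_1,P_1),…) ⊆ L^□(A,B)((r_1,R_1),…)`. -/
theorem stmt_6 {σ Q₁ Q₂ : Type*} [Finite σ] [Finite Q₁] [Finite Q₂] {ar : σ → ℕ}
    (A : TA σ ar Q₁) (B : TA σ ar Q₂)
    (pre : (Q₁ ⊕ Q₂) → (Q₁ ⊕ Q₂) → Prop)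
    (hpre : ∀ qs rs : List (Q₁ ⊕ Q₂), List.Forall₂ pre qs rs →
      LsqS (A.union B) qs ⊆ LsqS (A.union B) rs)
    (ps rs : List Q₁) (Ps Rs : List (Set Q₂))
    (hlen : ps.length = Ps.length)
    (hpr : List.Forall₂ (fun p r => pre (Sum.inl p) (Sum.inl r)) ps rs)
    (hPR : List.Forall₂ (fun R P => ∀ r' ∈ R, ∃ p' ∈ P, pre (Sum.inr r') (Sum.inr p'))
      Rs Ps) :
    LsqS A ps \ LsqM B Ps ⊆ LsqS A rs \ LsqM B Rs := by
  rintro t ⟨ht, htM⟩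
  constructor
  · have h1 : t ∈ LsqS (A.union B) (ps.map Sum.inl) := by
      rwa [lsqS_union_inl]
    have h2 : List.Forall₂ pre (ps.map Sum.inl) (rs.map Sum.inl) :=
      List.forall₂_map_right_iff.2 (List.forall₂_map_left_iff.2 hpr)
    have := hpre _ _ h2 h1
    rwa [lsqS_union_inl] at this
  · intro htR
    apply htM
    obtain ⟨qs, hqs, htq⟩ := htR
    -- build componentwise `pre`-larger tuple in `Ps`
    have key : ∀ (qs : List Q₂) (Rs Ps : List (Set Q₂)),
        List.Forall₂ (· ∈ ·) qs Rs →
        List.Forall₂ (fun R P => ∀ r' ∈ R, ∃ p' ∈ P, pre (Sum.inr r') (Sum.inr p')) Rs Ps →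
        ∃ qs' : List Q₂, List.Forall₂ (· ∈ ·) qs' Ps ∧
          List.Forall₂ (fun q q' => pre (Sum.inr q) (Sum.inr q')) qs qs' := by
      intro qs Rs Ps hmem hRP
      induction hRP generalizing qs with
      | nil =>
        cases hmem
        exact ⟨[], List.Forall₂.nil, List.Forall₂.nil⟩
      | cons hRPhd _ ih =>
        cases hmem with
        | cons hq hrest =>
          obtain ⟨qs', h1, h2⟩ := ih _ hrest
          obtain ⟨p', hp', hpre'⟩ := hRPhd _ hq
          exact ⟨p' :: qs', List.Forall₂.cons hp' h1, List.Forall₂.cons hpre' h2⟩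
    obtain ⟨qs', hqs', hrel⟩ := key qs Rs Ps hqs hPR
    refine ⟨qs', hqs', ?_⟩
    have h1 : t ∈ LsqS (A.union B) (qs.map Sum.inr) := by
      rwa [lsqS_union_inr]
    have h2 : List.Forall₂ pre (qs.map Sum.inr) (qs'.map Sum.inr) :=
      List.forall₂_map_right_iff.2 (List.forall₂_map_left_iff.2 hrel)
    have := hpre _ _ h2 h1
    rwa [lsqS_union_inr] at this
end

section
/- Let A be an alternating Büchi automaton and let ≼_F be a reflexive and transitive forward simulation on A. Then the union of all backward simulations on A parametrised by ≼_F is itself a backward simulation parametrised by ≼_F; consequently there exists a unique maximal backward simulation on A parametrised by ≼_F, and it is reflexive and transitive. -/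
/-- An alternating Büchi automaton over alphabet `σ` with states `Q`:
initial state `ι`, transition function `δ` (where `P ∈ δ q a` means `q →a P`),
and accepting states `α`. -/
structure ABA (σ Q : Type*) where
  ι : Q
  δ : Q → σ → Set (Set Q)
  α : Set Q

variable {σ Q : Type*}

/-- The assumption `∅ ∉ δ(q, a)` for all `q, a`. -/
def ABA.NoEmpty (A : ABA σ Q) : Prop := ∀ q a, ∅ ∉ A.δ q a

/-- The set of successors of a path `π` in a tree `T ⊆ Q⁺`. -/
def succs (T : Set (List Q)) (π : List Q) : Set Q := {q | π ++ [q] ∈ T}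

/-- A tree over `Q`: a set of nonempty finite words over `Q`, closed under nonempty
prefixes and containing exactly one word of length one (its root). -/
structure IsTree (T : Set (List Q)) : Prop where
  not_nil : [] ∉ T
  prefix_closed : ∀ π ∈ T, ∀ ρ : List Q, ρ <+: π → ρ ≠ [] → ρ ∈ T
  root : ∃! q : Q, [q] ∈ T

/-- The last state of a path (`A.ι` as a dummy for the empty path). -/
def lastSt (A : ABA σ Q) (π : List Q) : Q := π.getLastD A.ι

/-- A partial run of `A` on `w`: a finite tree in which every path either has no
successors or takes a transition of `A` on the appropriate letter of `w`. -/
structure IsPartialRun (A : ABA σ Q) (w : ℕ → σ) (T : Set (List Q)) : Prop where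
  tree : IsTree T
  finite : T.Finite
  step : ∀ π ∈ T, succs T π = ∅ ∨ succs T π ∈ A.δ (lastSt A π) (w (π.length - 1))

/-- A run of `A` on `w`. -/
structure IsRun (A : ABA σ Q) (w : ℕ → σ) (T : Set (List Q)) : Prop where
  tree : IsTree T
  step : ∀ π ∈ T, succs T π ∈ A.δ (lastSt A π) (w (π.length - 1))

/-- A (finite, maximal) branch of a tree. -/
def IsBranch (T : Set (List Q)) (π : List Q) : Prop := π ∈ T ∧ succs T π = ∅

/-- An infinite branch of a tree: all its nonempty finite prefixes belong to the tree. -/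
def InfBranch (T : Set (List Q)) (ξ : ℕ → Q) : Prop :=
  ∀ n : ℕ, (List.ofFn fun i : Fin (n + 1) => ξ i) ∈ T

/-- A run is accepting iff every infinite branch contains infinitely many accepting
states. -/
def Accepting (A : ABA σ Q) (T : Set (List Q)) : Prop :=
  ∀ ξ : ℕ → Q, InfBranch T ξ → ∀ n : ℕ, ∃ m ≥ n, ξ m ∈ A.α

/-- The language of `A`: the infinite words having an accepting run rooted at `ι`. -/
def ABA.Lang (A : ABA σ Q) : Set (ℕ → σ) :=
  {w | ∃ T : Set (List Q), IsRun A w T ∧ [A.ι] ∈ T ∧ Accepting A T}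

/-- `p ≼_α r` : `p ∈ α ⇒ r ∈ α`. -/
def αle (A : ABA σ Q) (p r : Q) : Prop := p ∈ A.α → r ∈ A.α

/-- A forward simulation on `A`. -/
def ForwardSim (A : ABA σ Q) (F : Q → Q → Prop) : Prop :=
  ∀ p r, F p r → (p ∈ A.α → r ∈ A.α) ∧
    ∀ a P, P ∈ A.δ p a → ∃ R ∈ A.δ r a, ∀ r' ∈ R, ∃ p' ∈ P, F p' r'

/-- A backward simulation on `A` parametrised by the forward simulation `F`. -/
def BackwardSim (A : ABA σ Q) (F B : Q → Q → Prop) : Prop :=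
  ∀ p r, B p r → (p = A.ι → r = A.ι) ∧ (p ∈ A.α → r ∈ A.α) ∧
    ∀ a q P, p ∉ P → insert p P ∈ A.δ q a →
      ∃ s R, r ∉ R ∧ insert r R ∈ A.δ s a ∧ B q s ∧ ∀ y ∈ R, ∃ x ∈ P, F x y

/-- The union of all backward simulations parametrised by a reflexive and transitive
forward simulation `F` is itself a backward simulation parametrised by `F`; it contains
every backward simulation parametrised by `F` (so it is the unique maximal one), and it
is reflexive and transitive. -/
theorem stmt_7 [Finite σ] [Finite Q] (A : ABA σ Q) (hne : A.NoEmpty)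
    (F : Q → Q → Prop) (hFr : Reflexive F) (hFt : Transitive F)
    (hF : ForwardSim A F) :
    BackwardSim A F (fun p r => ∃ B, BackwardSim A F B ∧ B p r) ∧
    (∀ B, BackwardSim A F B → ∀ p r, B p r →
      (fun p r => ∃ B, BackwardSim A F B ∧ B p r) p r) ∧
    Reflexive (fun p r => ∃ B, BackwardSim A F B ∧ B p r) ∧
    Transitive (fun p r => ∃ B, BackwardSim A F B ∧ B p r) := by
  have hUsim : BackwardSim A F (fun p r => ∃ B, BackwardSim A F B ∧ B p r) := by
    rintro p r ⟨B, hB, hpr⟩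
    obtain ⟨h1, h2, h3⟩ := hB p r hpr
    refine ⟨h1, h2, fun a q P hpP hins => ?_⟩
    obtain ⟨s, R, h4, h5, h6, h7⟩ := h3 a q P hpP hins
    exact ⟨s, R, h4, h5, ⟨B, hB, h6⟩, h7⟩
  have hEq : BackwardSim A F (· = ·) := by
    rintro p r rfl
    exact ⟨fun h => h, fun h => h, fun a q P hpP hins =>
      ⟨q, P, hpP, hins, rfl, fun y hy => ⟨y, hy, hFr y⟩⟩⟩
  refine ⟨hUsim, fun B hB p r h => ⟨B, hB, h⟩, fun p => ⟨_, hEq, rfl⟩, ?_⟩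
  intro p r t hpr hrt
  refine ⟨fun x z => ∃ y, (∃ B, BackwardSim A F B ∧ B x y) ∧
    (∃ B, BackwardSim A F B ∧ B y z), ?_, r, hpr, hrt⟩
  rintro x z ⟨y, hxy, hyz⟩
  obtain ⟨h1, h2, h3⟩ := hUsim x y hxy
  obtain ⟨h1', h2', h3'⟩ := hUsim y z hyz
  refine ⟨fun h => h1' (h1 h), fun h => h2' (h2 h), fun a q P hpP hins => ?_⟩
  obtain ⟨s, R, hR1, hR2, hR3, hR4⟩ := h3 a q P hpP hins
  obtain ⟨u, S, hS1, hS2, hS3, hS4⟩ := h3' a s R hR1 hR2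
  refine ⟨u, S, hS1, hS2, ⟨s, hR3, hS3⟩, fun w hw => ?_⟩
  obtain ⟨v, hv, hFvw⟩ := hS4 w hw
  obtain ⟨o, ho, hFov⟩ := hR4 v hv
  exact ⟨o, ho, hFt hFov hFvw⟩
end

section
/- Let A be an alternating Büchi automaton, ≼_F a reflexive and transitive forward simulation on A, and p, r states with p ≼_F r. For every partial run T of A on a word w ∈ Σ^ω with root(T) = p, there exists a partial run U of A on w with root(U) = r such that T ≼_F U (i.e., for every branch ψ of U there is a branch π of T with π ≼_F ψ componentwise). -/
variable {σ Q : Type*}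

/-- Paired derivations of a simulated path. -/
inductive SimRel (p r : Q) (R : List Q → Q → Set Q) (pk : List Q → Q → Q → Q) :
    List Q → List Q → Prop where
  | base : SimRel p r R pk [p] [r]
  | step {π ψ : List Q} {r' : Q} (h : SimRel p r R pk π ψ)
      (hr : r' ∈ R π (ψ.getLastD r)) :
      SimRel p r R pk (π ++ [pk π (ψ.getLastD r) r']) (ψ ++ [r'])

lemma concat_eq_concat' {α : Type*} {l₁ l₂ : List α} {a b : α}
    (h : l₁ ++ [a] = l₂ ++ [b]) : l₁ = l₂ ∧ a = b := by
  have := List.append_inj' h rfl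
  simpa using this

lemma prefix_concat_cases' {α : Type*} {ρ ψ : List α} {a : α} (h : ρ <+: ψ ++ [a]) :
    ρ = ψ ++ [a] ∨ ρ <+: ψ := by
  obtain ⟨t, ht⟩ := h
  rcases List.eq_nil_or_concat t with rfl | ⟨t', b, rfl⟩
  · left; simpa using ht
  · right
    rw [List.concat_eq_append, ← List.append_assoc] at ht
    obtain ⟨h1, h2⟩ := concat_eq_concat' ht
    exact h1 ▸ ⟨t', rfl⟩

lemma forall₂_getLastD' {α β : Type*} {F : α → β → Prop} :
    ∀ {π : List α} {ψ : List β}, List.Forall₂ F π ψ → π ≠ [] →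
      ∀ x y, F (π.getLastD x) (ψ.getLastD y) := by
  intro π ψ h
  induction h with
  | nil => intro h; exact absurd rfl h
  | @cons a b π ψ hab h ih =>
    intro _ x y
    rcases π with _ | ⟨c, π⟩
    · cases h; simpa using hab
    · cases h with
      | cons hcd h' =>
        simpa only [List.getLastD_cons] using ih (by simp) a b

/-- Forward-simulation lemma on partial runs: if `p ≼_F r` and `T` is a partial run on
`w` rooted at `p`, then there is a partial run `U` on `w` rooted at `r` with `T ≼_F U`
(every branch of `U` componentwise forward-simulates some branch of `T`). -/
theorem stmt_8 [Finite σ] [Finite Q] (A : ABA σ Q) (hne : A.NoEmpty)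
    (F : Q → Q → Prop) (hFr : Reflexive F) (hFt : Transitive F)
    (hF : ForwardSim A F)
    (p r : Q) (hpr : F p r) (w : ℕ → σ) (T : Set (List Q))
    (hT : IsPartialRun A w T) (hroot : [p] ∈ T) :
    ∃ U : Set (List Q), IsPartialRun A w U ∧ [r] ∈ U ∧
      ∀ ψ, IsBranch U ψ → ∃ π, IsBranch T π ∧ List.Forall₂ F π ψ := by
  classical
  -- choice of simulated transitions
  have key : ∀ π q, ∃ R : Set Q, ∃ pk : Q → Q,
      ((π ∈ T ∧ F (lastSt A π) q ∧ succs T π ∈ A.δ (lastSt A π) (w (π.length - 1))) →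
        R ∈ A.δ q (w (π.length - 1)) ∧ ∀ r' ∈ R, pk r' ∈ succs T π ∧ F (pk r') r') ∧
      (¬ (π ∈ T ∧ F (lastSt A π) q ∧ succs T π ∈ A.δ (lastSt A π) (w (π.length - 1))) →
        R = ∅) := by
    intro π q
    by_cases h : π ∈ T ∧ F (lastSt A π) q ∧ succs T π ∈ A.δ (lastSt A π) (w (π.length - 1))
    · obtain ⟨R, hR, hRsim⟩ := (hF _ _ h.2.1).2 _ _ h.2.2
      refine ⟨R, fun r' => if hr : ∃ p' ∈ succs T π, F p' r' then hr.choose else p,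
        fun _ => ⟨hR, ?_⟩, fun h' => absurd h h'⟩
      intro r' hr'
      have hex := hRsim r' hr'
      simp only [dif_pos hex]
      exact ⟨hex.choose_spec.1, hex.choose_spec.2⟩
    · exact ⟨∅, fun _ => p, fun h' => absurd h' h, fun _ => rfl⟩
  choose Rf pkf hkey1 hkey2 using key
  -- nonemptiness of Rf forces the conditions
  have hcond : ∀ {π q r'}, r' ∈ Rf π q →
      π ∈ T ∧ F (lastSt A π) q ∧ succs T π ∈ A.δ (lastSt A π) (w (π.length - 1)) := by
    intro π q r' hr'
    by_contra hc
    rw [hkey2 π q hc] at hr'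
    exact hr'
  set U : Set (List Q) := {ψ | ∃ π, SimRel p r Rf pkf π ψ} with hU
  -- basic invariant
  have inv : ∀ {π ψ}, SimRel p r Rf pkf π ψ → π ∈ T ∧ List.Forall₂ F π ψ := by
    intro π ψ h
    induction h with
    | base => exact ⟨hroot, .cons hpr .nil⟩
    | @step π ψ r' h hr ih =>
      have hc := hcond hr
      have hp := (hkey1 π _ hc).2 _ hr
      exact ⟨hp.1, List.rel_append ih.2 (.cons hp.2 .nil)⟩
  have nenil : ∀ {π ψ}, SimRel p r Rf pkf π ψ → π ≠ [] ∧ ψ ≠ [] := by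
    intro π ψ h
    induction h with
    | base => simp
    | step h hr ih => simp
  -- inversion lemmas
  have invRoot : ∀ {τ χ}, SimRel p r Rf pkf τ χ → χ = [r] → τ = [p] := by
    intro τ χ h
    cases h with
    | base => intro _; rfl
    | @step π₀ ψ₀ r₀ h₀ hr₀ =>
      intro he
      exfalso
      have hlen := congrArg List.length he
      simp at hlen
      exact (nenil h₀).2 hlen
  have invLen1 : ∀ {τ χ}, SimRel p r Rf pkf τ χ → χ.length = 1 → χ = [r] := by
    intro τ χ h
    cases h with
    | base => intro _; rfl
    | @step π₀ ψ₀ r₀ h₀ hr₀ =>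
      intro he
      exfalso
      simp at he
      exact (nenil h₀).2 he
  have invGen : ∀ {τ χ}, SimRel p r Rf pkf τ χ → ∀ {ψ q}, χ = ψ ++ [q] → ψ ≠ [] →
      ∃ π, SimRel p r Rf pkf π ψ ∧ q ∈ Rf π (ψ.getLastD r) ∧
        τ = π ++ [pkf π (ψ.getLastD r) q] := by
    intro τ χ h
    cases h with
    | base =>
      intro ψ q he hψ
      exfalso
      have hlen := congrArg List.length he
      simp at hlen
      exact hψ hlen
    | @step π₀ ψ₀ r₀ h₀ hr₀ =>
      intro ψ q he hψ
      obtain ⟨h1, h2⟩ := concat_eq_concat' he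
      subst h1
      subst h2
      exact ⟨π₀, h₀, hr₀, rfl⟩
  -- uniqueness of witness
  have uniq : ∀ {ψ π}, SimRel p r Rf pkf π ψ → ∀ {π'}, SimRel p r Rf pkf π' ψ → π = π' := by
    intro ψ π h
    induction h with
    | base => intro π' h'; exact (invRoot h' rfl).symm
    | @step π ψ r' h hr ih =>
      intro π' h'
      obtain ⟨π₀, h₀, hq, rfl⟩ := invGen h' rfl (nenil h).2
      rw [ih h₀]
  -- successors in U
  have hsucc : ∀ {π ψ}, SimRel p r Rf pkf π ψ → succs U ψ = Rf π (ψ.getLastD r) := by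
    intro π ψ h
    ext q
    simp only [succs, hU, Set.mem_setOf_eq]
    constructor
    · rintro ⟨τ, hτ⟩
      obtain ⟨π₀, h₀, hq, -⟩ := invGen hτ rfl (nenil h).2
      rwa [uniq h₀ h] at hq
    · intro hq
      exact ⟨_, SimRel.step h hq⟩
  have memU : [r] ∈ U := ⟨[p], .base⟩
  refine ⟨U, ⟨⟨?_, ?_, ?_⟩, ?_, ?_⟩, memU, ?_⟩
  · rintro ⟨π, h⟩
    exact (nenil h).2 rfl
  · -- prefix closed
    have pref : ∀ {π ψ}, SimRel p r Rf pkf π ψ → ∀ ρ, ρ <+: ψ → ρ ≠ [] → ρ ∈ U := by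
      intro π ψ h
      induction h with
      | base =>
        intro ρ hρ hne'
        have hρr : ρ = [r] := by
          obtain ⟨t, ht⟩ := hρ
          cases ρ with
          | nil => exact absurd rfl hne'
          | cons a l =>
            simp only [List.cons_append] at ht
            obtain ⟨rfl, hl⟩ := List.cons.inj ht
            simp at hl
            simp [hl.1]
        exact hρr ▸ memU
      | @step π ψ r' h hr ih =>
        intro ρ hρ hne'
        rcases prefix_concat_cases' hρ with rfl | h'
        · exact ⟨_, SimRel.step h hr⟩
        · exact ih ρ h' hne'
    rintro ψ ⟨π, h⟩ ρ hρ hρne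
    exact pref h ρ hρ hρne
  · -- unique root
    refine ⟨r, memU, fun q hq => ?_⟩
    obtain ⟨τ, hτ⟩ := hq
    have := invLen1 hτ (by simp)
    exact (List.cons.inj this).1
  · -- finiteness
    obtain ⟨N, hN⟩ := (hT.finite.image List.length).bddAbove
    apply (List.finite_length_le Q N).subset
    rintro ψ ⟨π, h⟩
    have h1 := (inv h).2.length_eq
    have h2 : π.length ≤ N := hN (Set.mem_image_of_mem _ (inv h).1)
    simp only [Set.mem_setOf_eq]
    omega
  · -- step
    rintro ψ ⟨π, h⟩
    rw [hsucc h]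
    by_cases hs : succs T π ∈ A.δ (lastSt A π) (w (π.length - 1))
    · right
      have hc : π ∈ T ∧ F (lastSt A π) (ψ.getLastD r) ∧
          succs T π ∈ A.δ (lastSt A π) (w (π.length - 1)) :=
        ⟨(inv h).1, forall₂_getLastD' (inv h).2 (nenil h).1 A.ι r, hs⟩
      have hmem := (hkey1 π _ hc).1
      have hlast : lastSt A ψ = ψ.getLastD r := by
        obtain ⟨a, l, rfl⟩ := List.exists_cons_of_ne_nil (nenil h).2
        simp only [lastSt, List.getLastD_cons]
      have hlen : ψ.length = π.length := (inv h).2.length_eq.symm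
      rw [hlast, hlen]
      exact hmem
    · left
      exact hkey2 π _ (fun hc => hs hc.2.2)
  · -- branches
    rintro ψ ⟨⟨π, h⟩, hs⟩
    refine ⟨π, ⟨(inv h).1, ?_⟩, (inv h).2⟩
    rcases hT.step π (inv h).1 with h0 | h0
    · exact h0
    · exfalso
      have hc : π ∈ T ∧ F (lastSt A π) (ψ.getLastD r) ∧
          succs T π ∈ A.δ (lastSt A π) (w (π.length - 1)) :=
        ⟨(inv h).1, forall₂_getLastD' (inv h).2 (nenil h).1 A.ι r, h0⟩
      have hmem := (hkey1 π _ hc).1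
      have hempty : Rf π (ψ.getLastD r) = ∅ := (hsucc h).symm.trans hs
      rw [hempty] at hmem
      exact hne _ _ hmem
end

section
/- Let A be an alternating Büchi automaton, ≼_F a reflexive and transitive forward simulation on A, and ≼_B a reflexive and transitive backward simulation on A parametrised by ≼_F. Let p, r be states with p ≼_B r, let T be a partial run of A on w ∈ Σ^ω, and let π ∈ branches(T) with leaf(π) = p. Then there exist a partial run U of A on w and ψ ∈ branches(U) with leaf(ψ) = r such that π ≼_B ψ componentwise and, for every 1 ≤ i ≤ |π|, T ⊖_i π ≼_F^∀∃ U ⊖_i ψ. -/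
variable {σ Q : Type*}

/-- `T ⊖_i π` (for `1 ≤ i ≤ |π|`, and all successors allowed when `i = |π|`):
the union of the branches of the suffix trees `T(π^i q)` for successors `q ≠ π_{i+1}`
of the prefix `π^i` of `π`. -/
def ominus (T : Set (List Q)) (π : List Q) (i : ℕ) : Set (List Q) :=
  {χ | χ ≠ [] ∧ χ.head? ≠ π[i]? ∧ π.take i ++ χ ∈ T ∧ succs T (π.take i ++ χ) = ∅}

/-!
Induction on the branch `π = π' ++ [p]`. Cutting `T` off below `π'` makes `π'` a branch; let
`q` be its last state. Since `q →a P` with `p ∈ P` at `π'`, the backward simulation yields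
`s →a {r} ∪ R` with `q ≼_B s`, `r ∉ R` and `P \ {p} ≼_F^∀∃ R`, and the induction hypothesis
gives a branch `ψ'` ending in `s` of a partial run `U'`. Below the leaf `ψ'` of `U'` we hang the
leaf `r` and, for each `y ∈ R`, a partial run rooted at `y` that forward-simulates the subtree of
`T` at a sibling `x ≠ p` of `p` with `x ≼_F y` (built by induction on the height of that subtree).
Pruning `T` and grafting onto `U'` only change the trees strictly below `π'` and `ψ'`, so the sets
`⊖_i` for `i < |π'|` are those of the induction hypothesis; for `i = |π'|` they consist of the
branches of the grafted runs.
-/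

section Forests

variable {A : ABA σ Q} {w : ℕ → σ}

def PrefixClosed (T : Set (List Q)) : Prop :=
  ∀ χ ∈ T, ∀ ρ : List Q, ρ <+: χ → ρ ≠ [] → ρ ∈ T

def roots (S : Set (List Q)) : Set Q := {q | [q] ∈ S}

structure IsPartialForest (A : ABA σ Q) (w : ℕ → σ) (S : Set (List Q)) : Prop where
  not_nil : [] ∉ S
  prefixClosed : PrefixClosed S
  finite : S.Finite
  step : ∀ χ ∈ S, succs S χ = ∅ ∨ succs S χ ∈ A.δ (lastSt A χ) (w (χ.length - 1))

lemma IsPartialRun.isPartialForest {T : Set (List Q)} (hT : IsPartialRun A w T) :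
    IsPartialForest A w T :=
  ⟨hT.tree.not_nil, hT.tree.prefix_closed, hT.finite, hT.step⟩

lemma IsPartialForest.isPartialRun {T : Set (List Q)} (hT : IsPartialForest A w T)
    (hroot : ∃! q, [q] ∈ T) : IsPartialRun A w T :=
  ⟨⟨hT.not_nil, hT.prefixClosed, hroot⟩, hT.finite, hT.step⟩

lemma lastSt_append (A : ABA σ Q) (ν : List Q) {ρ : List Q} (hρ : ρ ≠ []) :
    lastSt A (ν ++ ρ) = lastSt A ρ := by
  simp [lastSt, List.getLastD_eq_getLast?, List.getLast?_append_of_ne_nil ν hρ]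

lemma lastSt_of_getLast? (A : ABA σ Q) {π : List Q} {p : Q} (h : π.getLast? = some p) :
    lastSt A π = p := by
  simp [lastSt, List.getLastD_eq_getLast?, h]

lemma getLast?_eq_lastSt (A : ABA σ Q) {π : List Q} (hπ : π ≠ []) :
    π.getLast? = some (lastSt A π) := by
  simp [lastSt, List.getLastD_eq_getLast?, List.getLast?_eq_some_getLast hπ]

lemma PrefixClosed.mem_roots {S : Set (List Q)} (hS : PrefixClosed S) {q : Q} {χ : List Q}
    (h : q :: χ ∈ S) : q ∈ roots S :=
  hS _ h [q] ⟨χ, rfl⟩ (List.cons_ne_nil _ _)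

lemma PrefixClosed.append_notMem {T : Set (List Q)} (hT : PrefixClosed T) {π χ : List Q}
    (hπ : IsBranch T π) (hχ : χ ≠ []) : π ++ χ ∉ T := by
  intro hmem
  obtain ⟨u, χ, rfl⟩ := List.exists_cons_of_ne_nil hχ
  have hu : u ∈ succs T π := hT _ hmem (π ++ [u]) ⟨χ, by simp⟩ (by simp)
  simp [hπ.2] at hu

lemma roots_singleton (y : Q) : roots ({[y]} : Set (List Q)) = {y} := by
  ext q; simp [roots]

lemma succs_singleton (y : Q) : succs ({[y]} : Set (List Q)) [y] = ∅ := by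
  ext u; simp [succs]

lemma isBranch_singleton (y : Q) : IsBranch ({[y]} : Set (List Q)) [y] :=
  ⟨rfl, succs_singleton y⟩

lemma prefixClosed_singleton (y : Q) : PrefixClosed ({[y]} : Set (List Q)) := by
  rintro χ rfl ρ hρ hρne
  rcases List.prefix_concat_iff.1 (show ρ <+: [] ++ [y] from hρ) with h | h
  · simpa using h
  · exact absurd (List.prefix_nil.1 h) hρne

lemma isPartialForest_singleton (y : Q) : IsPartialForest A w {[y]} where
  not_nil := by simp
  prefixClosed := prefixClosed_singleton y
  finite := Set.finite_singleton _
  step := by rintro χ rfl; exact Or.inl (succs_singleton y)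

end Forests

section Surgery

variable {A : ABA σ Q} {w : ℕ → σ}

def AgreeOutside (ν : List Q) (V W : Set (List Q)) : Prop :=
  ∀ χ, (ν <+: χ → χ = ν) → (χ ∈ V ↔ χ ∈ W)

lemma AgreeOutside.succs_eq {ν χ : List Q} {V W : Set (List Q)} (h : AgreeOutside ν V W)
    (hχ : ¬ ν <+: χ) : succs V χ = succs W χ := by
  ext u
  refine h _ fun hpre => ?_
  rcases List.prefix_concat_iff.1 hpre with heq | hpre
  · exact heq.symm
  · exact absurd hpre hχ

lemma AgreeOutside.root_iff {ν : List Q} {V W : Set (List Q)} (h : AgreeOutside ν V W)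
    (hν : ν ≠ []) (q : Q) : [q] ∈ V ↔ [q] ∈ W := by
  refine h _ fun hpre => ?_
  rcases List.prefix_concat_iff.1 (show ν <+: [] ++ [q] from hpre) with heq | hpre
  · exact heq.symm
  · exact absurd (List.prefix_nil.1 hpre) hν

lemma not_prefix_take_append {ν χ : List Q} {i : ℕ} (hi : i < ν.length)
    (hχ : χ.head? ≠ ν[i]?) : ¬ ν <+: ν.take i ++ χ := by
  rintro ⟨t, ht⟩
  apply hχ
  have hlen : (ν.take i).length = i := List.length_take_of_le hi.le
  calc χ.head? = (ν.take i ++ χ)[i]? := by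
        rw [List.getElem?_append_right hlen.le, hlen, Nat.sub_self, List.head?_eq_getElem?]
    _ = ν[i]? := by rw [← ht, List.getElem?_append_left hi]

lemma AgreeOutside.ominus_eq {ν : List Q} {V W : Set (List Q)} (h : AgreeOutside ν V W)
    {i : ℕ} (hi : i < ν.length) : ominus V ν i = ominus W ν i := by
  ext χ
  refine and_congr_right fun _ => and_congr_right fun hχ => ?_
  have hnp := not_prefix_take_append hi hχ
  rw [h _ fun hpre => absurd hpre hnp, h.succs_eq hnp]

lemma ominus_append_of_lt (T : Set (List Q)) {π : List Q} (τ : List Q) {i : ℕ}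
    (hi : i < π.length) : ominus T (π ++ τ) i = ominus T π i := by
  simp only [ominus, List.take_append_of_le_length hi.le, List.getElem?_append_left hi]

lemma ominus_length_of_isBranch {T : Set (List Q)} (hT : PrefixClosed T) {π : List Q}
    (hπ : IsBranch T π) : ominus T π π.length = ∅ := by
  ext χ
  simp only [ominus, List.take_length, Set.mem_ofPred_eq, Set.mem_empty_iff_false, iff_false]
  exact fun ⟨hχ, _, hmem, _⟩ => hT.append_notMem hπ hχ hmem

lemma mem_ominus_append_singleton_length {T : Set (List Q)} {π χ : List Q} {p : Q} :
    χ ∈ ominus T (π ++ [p]) π.length ↔ χ ≠ [] ∧ χ.head? ≠ some p ∧ IsBranch T (π ++ χ) := by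
  simp [ominus, IsBranch]

def prune (T : Set (List Q)) (ν : List Q) : Set (List Q) := {χ ∈ T | ν <+: χ → χ = ν}

lemma agreeOutside_prune (T : Set (List Q)) (ν : List Q) : AgreeOutside ν (prune T ν) T :=
  fun _ hχ => ⟨And.left, fun h => ⟨h, hχ⟩⟩

lemma succs_prune_self (T : Set (List Q)) (ν : List Q) : succs (prune T ν) ν = ∅ := by
  ext u
  simp only [succs, prune, Set.mem_ofPred_eq, Set.mem_empty_iff_false, iff_false, not_and]
  intro _ h
  simpa using h (List.prefix_append ν [u])

lemma IsPartialForest.prune {T : Set (List Q)} (hT : IsPartialForest A w T) (ν : List Q) :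
    IsPartialForest A w (prune T ν) where
  not_nil h := hT.not_nil h.1
  prefixClosed χ hχ ρ hρ hρne := by
    refine ⟨hT.prefixClosed χ hχ.1 ρ hρ hρne, fun hνρ => ?_⟩
    obtain rfl := hχ.2 (hνρ.trans hρ)
    exact (hνρ.eq_of_length (le_antisymm hνρ.length_le hρ.length_le)).symm
  finite := hT.finite.subset fun _ h => h.1
  step χ hχ := by
    by_cases hνχ : ν <+: χ
    · rw [hχ.2 hνχ]
      exact Or.inl (succs_prune_self T ν)
    · rw [(agreeOutside_prune T ν).succs_eq hνχ]
      exact hT.step χ hχ.1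

lemma IsPartialRun.prune {T : Set (List Q)} (hT : IsPartialRun A w T) {ν : List Q}
    (hν : ν ≠ []) : IsPartialRun A w (prune T ν) := by
  refine (hT.isPartialForest.prune ν).isPartialRun ?_
  simpa only [(agreeOutside_prune T ν).root_iff hν] using hT.tree.root

lemma isBranch_prune {T : Set (List Q)} {ν : List Q} (hν : ν ∈ T) : IsBranch (prune T ν) ν :=
  ⟨⟨hν, fun _ => rfl⟩, succs_prune_self T ν⟩

def graft (V : Set (List Q)) (ν : List Q) (S : Set (List Q)) : Set (List Q) :=
  V ∪ (ν ++ ·) '' S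

lemma agreeOutside_graft (V : Set (List Q)) (ν : List Q) {S : Set (List Q)} (hS : [] ∉ S) :
    AgreeOutside ν (graft V ν S) V := by
  intro χ hχ
  refine ⟨?_, Or.inl⟩
  rintro (h | ⟨ρ, hρ, rfl⟩)
  · exact h
  · have hρnil : ρ = [] := by simpa using hχ (List.prefix_append ν ρ)
    exact absurd (hρnil ▸ hρ) hS

lemma append_mem_graft_iff {V S : Set (List Q)} {ν ρ : List Q} (hV : PrefixClosed V)
    (hν : IsBranch V ν) (hρ : ρ ≠ []) : ν ++ ρ ∈ graft V ν S ↔ ρ ∈ S := by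
  simp [graft, hV.append_notMem hν hρ]

lemma succs_graft_append {V S : Set (List Q)} {ν : List Q} (hV : PrefixClosed V)
    (hν : IsBranch V ν) (ρ : List Q) : succs (graft V ν S) (ν ++ ρ) = succs S ρ := by
  ext u
  simp only [succs, Set.mem_ofPred_eq, List.append_assoc]
  exact append_mem_graft_iff hV hν (by simp)

lemma succs_graft_self {V S : Set (List Q)} {ν : List Q} (hV : PrefixClosed V)
    (hν : IsBranch V ν) : succs (graft V ν S) ν = roots S := by
  ext u
  exact append_mem_graft_iff hV hν (List.cons_ne_nil u [])

lemma IsPartialForest.graft {V S : Set (List Q)} {ν : List Q} (hV : IsPartialForest A w V)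
    (hν : IsBranch V ν) (hS : IsPartialForest A (fun n => w (ν.length + n)) S)
    (hroots : roots S ∈ A.δ (lastSt A ν) (w (ν.length - 1))) :
    IsPartialForest A w (graft V ν S) where
  not_nil := by
    rintro (h | ⟨ρ, hρ, hνρ⟩)
    · exact hV.not_nil h
    · exact hS.not_nil ((List.append_eq_nil_iff.1 hνρ).2 ▸ hρ)
  prefixClosed := by
    rintro χ (hχ | ⟨ρ, hρ, rfl⟩) τ hτ hτne
    · exact Or.inl (hV.prefixClosed χ hχ τ hτ hτne)
    rcases List.prefix_or_prefix_of_prefix hτ (List.prefix_append ν ρ) with hτν | hντ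
    · exact Or.inl (hV.prefixClosed ν hν.1 τ hτν hτne)
    obtain ⟨τ, rfl⟩ := hντ
    rcases eq_or_ne τ [] with rfl | hτ'
    · exact Or.inl (by simpa using hν.1)
    · exact Or.inr ⟨τ, hS.prefixClosed ρ hρ τ ((List.prefix_append_right_inj ν).1 hτ) hτ', rfl⟩
  finite := hV.finite.union (hS.finite.image _)
  step := by
    rintro χ (hχ | ⟨ρ, hρ, rfl⟩)
    · by_cases hχν : χ = ν
      · subst hχν
        exact Or.inr (succs_graft_self hV.prefixClosed hν ▸ hroots)
      have hνχ : ¬ ν <+: χ := by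
        rintro ⟨τ, rfl⟩
        rcases eq_or_ne τ [] with rfl | hτ
        · exact hχν (List.append_nil ν)
        · exact hV.prefixClosed.append_notMem hν hτ hχ
      rw [(agreeOutside_graft V ν hS.not_nil).succs_eq hνχ]
      exact hV.step χ hχ
    · have hρne : ρ ≠ [] := fun h => hS.not_nil (h ▸ hρ)
      have hlen : (ν ++ ρ).length - 1 = ν.length + (ρ.length - 1) := by
        have := List.length_pos_iff.2 hρne
        simp only [List.length_append]; omega
      rw [succs_graft_append hV.prefixClosed hν ρ, lastSt_append A ν hρne, hlen]
      exact hS.step ρ hρ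

lemma IsPartialRun.graft {V S : Set (List Q)} {ν : List Q} (hV : IsPartialRun A w V)
    (hν : IsBranch V ν) (hS : IsPartialForest A (fun n => w (ν.length + n)) S)
    (hroots : roots S ∈ A.δ (lastSt A ν) (w (ν.length - 1))) :
    IsPartialRun A w (graft V ν S) := by
  refine (hV.isPartialForest.graft hν hS hroots).isPartialRun ?_
  have hνne : ν ≠ [] := fun h => hV.tree.not_nil (h ▸ hν.1)
  simpa only [(agreeOutside_graft V ν hS.not_nil).root_iff hνne] using hV.tree.root

end Surgery

section Simulation

variable {A : ABA σ Q} {w : ℕ → σ} {F : Q → Q → Prop}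

lemma succs_biUnion_of_mem {K : Set Q} {G : Q → Set (List Q)}
    (hG : ∀ y ∈ K, PrefixClosed (G y)) (hroots : ∀ y ∈ K, roots (G y) = {y})
    {y : Q} (hy : y ∈ K) {q : Q} {χ : List Q} (hχ : q :: χ ∈ G y) :
    succs (⋃ y ∈ K, G y) (q :: χ) = succs (G y) (q :: χ) := by
  have hq : q = y := by simpa [hroots y hy] using (hG y hy).mem_roots hχ
  ext u
  simp only [succs, Set.mem_iUnion, Set.mem_ofPred_eq, List.cons_append]
  refine ⟨fun ⟨y', hy', hu⟩ => ?_, fun hu => ⟨y, hy, hu⟩⟩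
  have hq' : q = y' := by simpa [hroots y' hy'] using (hG y' hy').mem_roots hu
  exact hq ▸ hq' ▸ hu

lemma roots_biUnion {K : Set Q} {G : Q → Set (List Q)} (hroots : ∀ y ∈ K, roots (G y) = {y}) :
    roots (⋃ y ∈ K, G y) = K := by
  ext q
  have hmem : ∀ y ∈ K, [q] ∈ G y ↔ q = y := fun y hy => by
    rw [← Set.mem_singleton_iff, ← hroots y hy]; rfl
  simp only [roots, Set.mem_iUnion, Set.mem_ofPred_eq]
  exact ⟨fun ⟨y, hy, h⟩ => (hmem y hy).1 h ▸ hy, fun hq => ⟨q, hq, (hmem q hq).2 rfl⟩⟩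

lemma IsPartialForest.biUnion {K : Set Q} {G : Q → Set (List Q)} (hK : K.Finite)
    (hG : ∀ y ∈ K, IsPartialForest A w (G y)) (hroots : ∀ y ∈ K, roots (G y) = {y}) :
    IsPartialForest A w (⋃ y ∈ K, G y) where
  not_nil h := by
    obtain ⟨y, hy, h⟩ := Set.mem_iUnion₂.1 h
    exact (hG y hy).not_nil h
  prefixClosed χ hχ ρ hρ hρne := by
    obtain ⟨y, hy, hχ⟩ := Set.mem_iUnion₂.1 hχ
    exact Set.mem_biUnion hy ((hG y hy).prefixClosed χ hχ ρ hρ hρne)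
  finite := hK.biUnion fun y hy => (hG y hy).finite
  step χ hχ := by
    obtain ⟨y, hy, hχ⟩ := Set.mem_iUnion₂.1 hχ
    obtain ⟨q, χ, rfl⟩ := List.exists_cons_of_ne_nil fun h => (hG y hy).not_nil (h ▸ hχ)
    rw [succs_biUnion_of_mem (fun y hy => (hG y hy).prefixClosed) hroots hy hχ]
    exact (hG y hy).step _ hχ

lemma isBranch_biUnion {K : Set Q} {G : Q → Set (List Q)}
    (hG : ∀ y ∈ K, IsPartialForest A w (G y)) (hroots : ∀ y ∈ K, roots (G y) = {y})
    {χ : List Q} (hχ : IsBranch (⋃ y ∈ K, G y) χ) :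
    ∃ y ∈ K, χ.head? = some y ∧ IsBranch (G y) χ := by
  obtain ⟨y, hy, hχG⟩ := Set.mem_iUnion₂.1 hχ.1
  obtain ⟨q, χ, rfl⟩ := List.exists_cons_of_ne_nil fun h => (hG y hy).not_nil (h ▸ hχG)
  have hq : q = y := by simpa [hroots y hy] using (hG y hy).prefixClosed.mem_roots hχG
  refine ⟨y, hy, by simp [hq], hχG, ?_⟩
  rw [← succs_biUnion_of_mem (fun y hy => (hG y hy).prefixClosed) hroots hy hχG]
  exact hχ.2

def node (y : Q) (R : Set Q) (G : Q → Set (List Q)) : Set (List Q) :=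
  graft {[y]} [y] (⋃ y' ∈ R, G y')

lemma IsPartialForest.node [Finite Q] {y : Q} {R : Set Q} {G : Q → Set (List Q)}
    (hG : ∀ y' ∈ R, IsPartialForest A (fun n => w (1 + n)) (G y'))
    (hroots : ∀ y' ∈ R, roots (G y') = {y'}) (hR : R ∈ A.δ y (w 0)) :
    IsPartialForest A w (node y R G) :=
  (isPartialForest_singleton y).graft (isBranch_singleton y) (.biUnion R.toFinite hG hroots)
    (by simpa [roots_biUnion hroots, lastSt] using hR)

lemma roots_node {y : Q} {R : Set Q} {G : Q → Set (List Q)} (hnil : ∀ y' ∈ R, [] ∉ G y') :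
    roots (node y R G) = {y} := by
  ext q
  exact ((agreeOutside_graft _ _ (by simpa using hnil)).root_iff (List.cons_ne_nil y []) q).trans
    (Set.ext_iff.1 (roots_singleton y) q)

lemma exists_isBranch_of_isBranch_node {y : Q} {R : Set Q} {G : Q → Set (List Q)}
    (hG : ∀ y' ∈ R, IsPartialForest A w (G y')) (hroots : ∀ y' ∈ R, roots (G y') = {y'})
    (hR : R.Nonempty) {χ : List Q} (hχ : IsBranch (node y R G) χ) :
    ∃ y' ∈ R, ∃ ρ, χ = y :: ρ ∧ IsBranch (G y') ρ := by
  have hclosed := prefixClosed_singleton y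
  obtain ⟨hχ | ⟨ρ, hρ, rfl⟩, hleaf⟩ := hχ
  · obtain rfl : χ = [y] := hχ
    rw [node, succs_graft_self hclosed (isBranch_singleton y), roots_biUnion hroots] at hleaf
    exact absurd hleaf hR.ne_empty
  · rw [node, succs_graft_append hclosed (isBranch_singleton y)] at hleaf
    obtain ⟨y', hy', -, hbr⟩ := isBranch_biUnion hG hroots ⟨hρ, hleaf⟩
    exact ⟨y', hy', ρ, rfl, hbr⟩

theorem exists_forwardSim_forest [Finite Q] (hne : A.NoEmpty) (hF : ForwardSim A F)
    {T : Set (List Q)} (hT : IsPartialForest A w T) {ν : List Q} {x y : Q}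
    (hx : ν ++ [x] ∈ T) (hxy : F x y) :
    ∃ S, IsPartialForest A (fun n => w (ν.length + n)) S ∧ roots S = {y} ∧
      ∀ χ', IsBranch S χ' → ∃ ρ, IsBranch T (ν ++ x :: ρ) ∧ List.Forall₂ F (x :: ρ) χ' := by
  obtain ⟨N, hN⟩ : ∃ N, ∀ χ ∈ T, χ.length ≤ ν.length + N := by
    obtain ⟨N, hN⟩ := (hT.finite.image List.length).bddAbove
    exact ⟨N, fun χ hχ => (hN ⟨χ, hχ, rfl⟩).trans (Nat.le_add_left N _)⟩
  induction N generalizing ν x y with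
  | zero => simpa using hN _ hx
  | succ N ih =>
    rcases hT.step _ hx with hleaf | hstep
    · refine ⟨{[y]}, isPartialForest_singleton y, roots_singleton y, ?_⟩
      rintro χ' ⟨rfl, -⟩
      exact ⟨[], by simpa using ⟨hx, hleaf⟩, .cons hxy .nil⟩
    simp only [lastSt_append A ν (List.cons_ne_nil x []), List.length_append,
      List.length_singleton, Nat.add_sub_cancel] at hstep
    obtain ⟨R, hR, hRsim⟩ := (hF x y hxy).2 _ _ hstep
    have hchild : ∀ y' ∈ R, ∃ G, IsPartialForest A (fun n => w (ν.length + (1 + n))) G ∧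
        roots G = {y'} ∧ ∀ χ', IsBranch G χ' →
          ∃ ρ, IsBranch T (ν ++ x :: ρ) ∧ List.Forall₂ F ρ χ' := by
      intro y' hy'
      obtain ⟨x', hx', hx'y'⟩ := hRsim y' hy'
      obtain ⟨G, hG, hGroots, hGsim⟩ := ih (ν := ν ++ [x]) hx' hx'y'
        (fun χ hχ => by simpa [Nat.add_assoc, Nat.add_comm 1] using hN χ hχ)
      refine ⟨G, by simpa [Nat.add_assoc] using hG, hGroots, fun χ' hχ' => ?_⟩
      obtain ⟨ρ, hρ, hρχ'⟩ := hGsim χ' hχ'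
      exact ⟨x' :: ρ, by simpa using hρ, hρχ'⟩
    choose! G hG hGroots hGsim using hchild
    refine ⟨node y R G, .node hG hGroots (by simpa using hR),
      roots_node fun y' hy' => (hG y' hy').not_nil, ?_⟩
    intro χ' hχ'
    -- `∅ ∉ δ`: otherwise the inner node `ν ++ [x]` of `T` would be mimicked by the leaf `[y]`.
    have hRne : R.Nonempty := Set.nonempty_iff_ne_empty.2 fun h => hne y _ (h ▸ hR)
    obtain ⟨y', hy', ρ', rfl, hbr⟩ := exists_isBranch_of_isBranch_node hG hGroots hRne hχ'
    obtain ⟨ρ, hρ, hρχ'⟩ := hGsim y' hy' ρ' hbr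
    exact ⟨ρ, hρ, .cons hxy hρχ'⟩

end Simulation

section Backward

variable {A : ABA σ Q} {w : ℕ → σ} {F B : Q → Q → Prop}

theorem exists_sibling_forest [Finite Q] (hne : A.NoEmpty) (hF : ForwardSim A F)
    {T : Set (List Q)} (hT : IsPartialForest A w T) {π' : List Q} {p r : Q} {R : Set Q}
    (hrR : r ∉ R) (hRsim : ∀ y ∈ R, ∃ x ∈ succs T π' \ {p}, F x y) :
    ∃ S, IsPartialForest A (fun n => w (π'.length + n)) S ∧ roots S = insert r R ∧
      IsBranch S [r] ∧ ∀ χ', IsBranch S χ' → χ'.head? ≠ some r →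
        ∃ χ ∈ ominus T (π' ++ [p]) π'.length, List.Forall₂ F χ χ' := by
  classical
  have hchild : ∀ y ∈ R, ∃ G, IsPartialForest A (fun n => w (π'.length + n)) G ∧
      roots G = {y} ∧ ∀ χ', IsBranch G χ' →
        ∃ χ ∈ ominus T (π' ++ [p]) π'.length, List.Forall₂ F χ χ' := by
    intro y hy
    obtain ⟨x, ⟨hx, hxp⟩, hxy⟩ := hRsim y hy
    obtain ⟨G, hG, hGroots, hGsim⟩ := exists_forwardSim_forest hne hF hT hx hxy
    refine ⟨G, hG, hGroots, fun χ' hχ' => ?_⟩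
    obtain ⟨ρ, hρ, hρχ'⟩ := hGsim χ' hχ'
    exact ⟨x :: ρ, mem_ominus_append_singleton_length.2 ⟨List.cons_ne_nil _ _, by simpa using hxp,
      hρ⟩, hρχ'⟩
  choose! G hGforest hGroots hGsim using hchild
  set G' := Function.update G r {[r]}
  have hG'r : G' r = {[r]} := Function.update_self r _ G
  have hG'R : ∀ y ∈ R, G' y = G y := fun y hy =>
    Function.update_of_ne (ne_of_mem_of_not_mem hy hrR) _ G
  have hforest : ∀ y ∈ insert r R, IsPartialForest A (fun n => w (π'.length + n)) (G' y) := by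
    simp only [Set.forall_mem_insert, hG'r]
    exact ⟨isPartialForest_singleton r, fun y hy => hG'R y hy ▸ hGforest y hy⟩
  have hroots : ∀ y ∈ insert r R, roots (G' y) = {y} := by
    simp only [Set.forall_mem_insert, hG'r]
    exact ⟨roots_singleton r, fun y hy => hG'R y hy ▸ hGroots y hy⟩
  have hrG' : [r] ∈ G' r := hG'r ▸ rfl
  refine ⟨⋃ y ∈ insert r R, G' y, .biUnion (Set.toFinite _) hforest hroots,
    roots_biUnion hroots, ⟨Set.mem_biUnion (Set.mem_insert r R) hrG', ?_⟩, ?_⟩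
  · rw [succs_biUnion_of_mem (fun y hy => (hforest y hy).prefixClosed) hroots
      (Set.mem_insert r R) hrG', hG'r]
    exact succs_singleton r
  · intro χ' hχ' hhead
    obtain ⟨y, hy, hyhead, hbr⟩ := isBranch_biUnion hforest hroots hχ'
    have hyR : y ∈ R := hy.resolve_left fun h => hhead (h ▸ hyhead)
    exact hGsim y hyR χ' (hG'R y hyR ▸ hbr)

/-- `T ⊖_i π ≼_F^∀∃ U ⊖_i ψ` for all `1 ≤ i ≤ |π|`. -/
def OminusLE (F : Q → Q → Prop) (T : Set (List Q)) (π : List Q) (U : Set (List Q))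
    (ψ : List Q) : Prop :=
  ∀ i : ℕ, 1 ≤ i → i ≤ π.length →
    ∀ χ' ∈ ominus U ψ i, ∃ χ ∈ ominus T π i, List.Forall₂ F χ χ'

lemma ominusLE_graft {T U' S : Set (List Q)} {π' ψ' : List Q} {p r : Q}
    (hU' : PrefixClosed U') (hψ' : IsBranch U' ψ') (hlen : ψ'.length = π'.length)
    (hSnil : [] ∉ S) (hU : PrefixClosed (graft U' ψ' S))
    (hψ : IsBranch (graft U' ψ' S) (ψ' ++ [r]))
    (hSsim : ∀ χ', IsBranch S χ' → χ'.head? ≠ some r →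
      ∃ χ ∈ ominus T (π' ++ [p]) π'.length, List.Forall₂ F χ χ')
    (hle : OminusLE F (prune T π') π' U' ψ') :
    OminusLE F T (π' ++ [p]) (graft U' ψ' S) (ψ' ++ [r]) := by
  intro i hi1 hi χ' hχ'
  rw [List.length_append, List.length_singleton] at hi
  rcases lt_trichotomy i π'.length with hlt | rfl | hgt
  · rw [ominus_append_of_lt _ _ (hlen ▸ hlt),
      (agreeOutside_graft U' ψ' hSnil).ominus_eq (hlen ▸ hlt)] at hχ'
    obtain ⟨χ, hχ, hχχ'⟩ := hle i hi1 hlt.le χ' hχ'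
    rw [(agreeOutside_prune T π').ominus_eq hlt, ← ominus_append_of_lt T [p] hlt] at hχ
    exact ⟨χ, hχ, hχχ'⟩
  · rw [← hlen, mem_ominus_append_singleton_length] at hχ'
    obtain ⟨hχne, hhead, hmem, hleaf⟩ := hχ'
    rw [append_mem_graft_iff hU' hψ' hχne] at hmem
    rw [succs_graft_append hU' hψ'] at hleaf
    exact hSsim χ' ⟨hmem, hleaf⟩ hhead
  · have hi : i = (ψ' ++ [r]).length := by simp; omega
    rw [hi, ominus_length_of_isBranch hU hψ] at hχ'
    exact absurd hχ' (Set.notMem_empty _)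

def BackwardSimulable (A : ABA σ Q) (F B : Q → Q → Prop) (w : ℕ → σ) (T : Set (List Q))
    (π : List Q) (r : Q) : Prop :=
  ∃ (U : Set (List Q)) (ψ : List Q), IsPartialRun A w U ∧ IsBranch U ψ ∧
    ψ.getLast? = some r ∧ List.Forall₂ B π ψ ∧ OminusLE F T π U ψ

lemma backwardSimulable_singleton {T : Set (List Q)} {p r : Q} (hpr : B p r) :
    BackwardSimulable A F B w T [p] r := by
  refine ⟨{[r]}, [r],
    (isPartialForest_singleton r).isPartialRun ⟨r, rfl, fun q h => by simpa using h⟩,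
    isBranch_singleton r, rfl, .cons hpr .nil, fun i hi1 hi χ' hχ' => ?_⟩
  obtain rfl : i = 1 := le_antisymm hi hi1
  have hempty : ominus {[r]} [r] 1 = ∅ := ominus_length_of_isBranch
    (prefixClosed_singleton r) (isBranch_singleton r)
  exact absurd (hempty ▸ hχ') (Set.notMem_empty _)

theorem backwardSimulable_append [Finite Q] (hne : A.NoEmpty) (hF : ForwardSim A F)
    (hB : BackwardSim A F B) {T : Set (List Q)} (hT : IsPartialRun A w T) {π' : List Q}
    {p r : Q} (hπ' : π' ≠ []) (hπ : IsBranch T (π' ++ [p])) (hpr : B p r)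
    (ih : ∀ s, B (lastSt A π') s → BackwardSimulable A F B w (prune T π') π' s) :
    BackwardSimulable A F B w T (π' ++ [p]) r := by
  have hπ'T : π' ∈ T := hT.tree.prefix_closed _ hπ.1 π' (List.prefix_append _ _) hπ'
  have hp : p ∈ succs T π' := hπ.1
  have hstep : succs T π' ∈ A.δ (lastSt A π') (w (π'.length - 1)) :=
    (hT.step π' hπ'T).resolve_left (Set.nonempty_of_mem hp).ne_empty
  obtain ⟨s, R, hrR, hR, hqs, hRsim⟩ := (hB p r hpr).2.2 _ _ (succs T π' \ {p}) (by simp)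
    (by rwa [Set.insert_sdiff_singleton, Set.insert_eq_of_mem hp])
  obtain ⟨U', ψ', hU', hψ', hlast, hBψ', hle⟩ := ih s hqs
  obtain ⟨S, hS, hSroots, hrS, hSsim⟩ := exists_sibling_forest hne hF hT.isPartialForest hrR hRsim
  have hlen : ψ'.length = π'.length := hBψ'.length_eq.symm
  have hU := hU'.graft hψ' (hlen ▸ hS) (by rwa [hSroots, lastSt_of_getLast? A hlast, hlen])
  have hψ : IsBranch (graft U' ψ' S) (ψ' ++ [r]) :=
    ⟨(append_mem_graft_iff hU'.tree.prefix_closed hψ' (List.cons_ne_nil r [])).2 hrS.1,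
      succs_graft_append hU'.tree.prefix_closed hψ' [r] ▸ hrS.2⟩
  exact ⟨_, _, hU, hψ, List.getLast?_concat, List.rel_append hBψ' (.cons hpr .nil),
    ominusLE_graft hU'.tree.prefix_closed hψ' hlen hS.not_nil hU.tree.prefix_closed hψ hSsim hle⟩

end Backward

theorem stmt_9_general [Finite Q] (A : ABA σ Q) (hne : A.NoEmpty)
    (F B : Q → Q → Prop)
    (hF : ForwardSim A F)
    (hB : BackwardSim A F B)
    (p r : Q) (hpr : B p r) (w : ℕ → σ) (T : Set (List Q))
    (hT : IsPartialRun A w T) (π : List Q) (hπ : IsBranch T π)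
    (hlast : π.getLast? = some p) :
    ∃ (U : Set (List Q)) (ψ : List Q), IsPartialRun A w U ∧ IsBranch U ψ ∧
      ψ.getLast? = some r ∧ List.Forall₂ B π ψ ∧
      ∀ i : ℕ, 1 ≤ i → i ≤ π.length →
        ∀ χ' ∈ ominus U ψ i, ∃ χ ∈ ominus T π i, List.Forall₂ F χ χ' := by
  induction π using List.reverseRecOn generalizing T p r with
  | nil => simp at hlast
  | append_singleton π' p' ih =>
    obtain rfl : p' = p := by simpa using hlast
    rcases eq_or_ne π' [] with rfl | hπ'
    · exact backwardSimulable_singleton hpr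
    · have hπ'T : π' ∈ T := hT.tree.prefix_closed _ hπ.1 π' (List.prefix_append _ _) hπ'
      exact backwardSimulable_append hne hF hB hT hπ' hπ hpr fun s hs =>
        ih _ s hs _ (hT.prune hπ') (isBranch_prune hπ'T) (getLast?_eq_lastSt A hπ')

/-- Backward-simulation lemma on partial runs: if `p ≼_B r`, `T` is a partial run on `w`
and `π` a branch of `T` with `leaf(π) = p`, then there are a partial run `U` on `w` and
a branch `ψ` of `U` with `leaf(ψ) = r` such that `π ≼_B ψ` componentwise and
`T ⊖_i π ≼_F^∀∃ U ⊖_i ψ` for all `1 ≤ i ≤ |π|`. -/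
theorem stmt_9 [Finite σ] [Finite Q] (A : ABA σ Q) (hne : A.NoEmpty)
    (F B : Q → Q → Prop)
    (hFr : Reflexive F) (hFt : Transitive F) (hF : ForwardSim A F)
    (hBr : Reflexive B) (hBt : Transitive B) (hB : BackwardSim A F B)
    (p r : Q) (hpr : B p r) (w : ℕ → σ) (T : Set (List Q))
    (hT : IsPartialRun A w T) (π : List Q) (hπ : IsBranch T π)
    (hlast : π.getLast? = some p) :
    ∃ (U : Set (List Q)) (ψ : List Q), IsPartialRun A w U ∧ IsBranch U ψ ∧
      ψ.getLast? = some r ∧ List.Forall₂ B π ψ ∧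
      ∀ i : ℕ, 1 ≤ i → i ≤ π.length →
        ∀ χ' ∈ ominus U ψ i, ∃ χ ∈ ominus T π i, List.Forall₂ F χ χ' :=
  stmt_9_general A hne F B hF hB p r hpr w T hT π hπ hlast
end

section
/- Let A = (Σ, Q, ι, δ, α) be an alternating Büchi automaton, ≼ a preorder on Q, and ≡ = ≼ ∩ ≼^{-1}. Then L(A/≡) ⊆ L(A+_≼), i.e., the language of the quotient of A by ≡ is included in the language of the automaton extended according to ≼. -/
variable {σ Q : Type*}

/-- The quotient automaton `A/≡` of `A` by the equivalence `e`. -/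
def quotABA (A : ABA σ Q) (e : Q → Q → Prop) : ABA σ (Quot e) where
  ι := Quot.mk e A.ι
  δ := fun x a => {S | ∃ p, Quot.mk e p = x ∧ ∃ P ∈ A.δ p a, S = Quot.mk e '' P}
  α := Quot.mk e '' A.α

/-- The automaton `A⁺_≼` extended according to the preorder `≼`. -/
def extABA (A : ABA σ Q) (M : Q → Q → Prop) : ABA σ Q where
  ι := A.ι
  δ := fun q a => {P | ∃ p, M p q ∧ P ∈ A.δ p a}
  α := {p | ∃ q ∈ A.α, M q p ∧ M p q}


private lemma getLastD_map' {β : Type*} (f : Q → β) :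
    ∀ (l : List Q) (d : Q), (l.map f).getLastD (f d) = f (l.getLastD d)
  | [], _ => rfl
  | a :: l, d => by rw [List.map_cons, List.getLastD_cons, List.getLastD_cons,
      getLastD_map' f l a]

private lemma prefix_concat' {α : Type*} {l₁ l₂ : List α} {a : α}
    (h : l₁ <+: l₂ ++ [a]) : l₁ <+: l₂ ∨ l₁ = l₂ ++ [a] := by
  rcases List.prefix_or_prefix_of_prefix h (List.prefix_append l₂ [a]) with h1 | h1
  · exact Or.inl h1
  · have h2 := h1.length_le
    have h3 := h.length_le
    simp only [List.length_append, List.length_singleton] at h3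
    rcases eq_or_lt_of_le h2 with h4 | h4
    · exact Or.inl ((h1.eq_of_length h4).symm ▸ List.prefix_refl _)
    · exact Or.inr (h.eq_of_length (by simp; omega))

/-- For any preorder `≼` with `≡ = ≼ ∩ ≼⁻¹`, `L(A/≡) ⊆ L(A⁺_≼)`. -/
theorem stmt_10 [Finite σ] [Finite Q] (A : ABA σ Q) (hne : A.NoEmpty)
    (pre : Q → Q → Prop) (hr : Reflexive pre) (ht : Transitive pre) :
    ABA.Lang (quotABA A fun p q => pre p q ∧ pre q p) ⊆ ABA.Lang (extABA A pre) := by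
  intro w hw
  set e : Q → Q → Prop := fun p q => pre p q ∧ pre q p with he
  obtain ⟨T, hrun, hroot, hacc⟩ := hw
  set mk : Q → Quot e := Quot.mk e with hmk
  have heq : Equivalence e :=
    ⟨fun x => ⟨hr x, hr x⟩, fun h => ⟨h.2, h.1⟩,
      fun h1 h2 => ⟨ht h1.1 h2.1, ht h2.2 h1.2⟩⟩
  have eqv : ∀ a b : Q, mk a = mk b → pre a b ∧ pre b a := fun a b h =>
    heq.eqvGen_iff.mp (Quot.eq.mp h)
  have key : ∀ ρ ∈ T, ∃ p P, mk p = lastSt (quotABA A e) ρ ∧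
      P ∈ A.δ p (w (ρ.length - 1)) ∧ succs T ρ = mk '' P := by
    intro ρ hρ
    obtain ⟨p, hp, P, hP, hS⟩ := hrun.step ρ hρ
    exact ⟨p, P, hp, hP, hS⟩
  haveI : Inhabited Q := ⟨A.ι⟩
  choose! p P hp hP hS using key
  set T' : Set (List Q) := {π : List Q | π.map mk ∈ T ∧ π.head? = some A.ι ∧
      ∀ ρ q, ρ ≠ [] → ρ ++ [q] <+: π → q ∈ P (ρ.map mk)} with hT'
  have hmem_ne : ∀ π ∈ T', π ≠ [] := by
    rintro π ⟨_, h2, _⟩ rfl; simp at h2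
  have hsuccs : ∀ π ∈ T', succs T' π = P (π.map mk) := by
    intro π hπ
    have hne' := hmem_ne π hπ
    obtain ⟨h1, h2, h3⟩ := hπ
    ext q
    constructor
    · rintro ⟨hq1, hq2, hq3⟩
      exact hq3 π q hne' (List.prefix_refl _)
    · intro hq
      refine ⟨?_, ?_, ?_⟩
      · have : mk q ∈ succs T (π.map mk) := by
          rw [hS (π.map mk) h1]; exact ⟨q, hq, rfl⟩
        simpa [succs] using this
      · rw [List.head?_append_of_ne_nil _ hne']; exact h2
      · intro ρ q' hρne hpre
        rcases prefix_concat' hpre with h | h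
        · exact h3 ρ q' hρne h
        · obtain ⟨hl, hr'⟩ := List.append_inj' h rfl
          subst hl
          simp only [List.cons.injEq] at hr'
          exact hr'.1 ▸ hq
  have htree' : IsTree T' := by
    refine ⟨fun h => by simpa using h.2.1, ?_, ?_⟩
    · rintro π ⟨h1, h2, h3⟩ ρ hpre hρne
      refine ⟨hrun.tree.prefix_closed _ h1 _ (hpre.map mk) (by simpa using hρne), ?_, ?_⟩
      · obtain ⟨t, rfl⟩ := hpre
        rw [List.head?_append_of_ne_nil _ hρne] at h2; exact h2
      · intro ρ' q hρ'ne hpre'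
        exact h3 ρ' q hρ'ne (hpre'.trans hpre)
    · refine ⟨A.ι, ⟨hroot, rfl, ?_⟩, ?_⟩
      · intro ρ q hρne hpre
        have := hpre.length_le
        simp only [List.length_append, List.length_singleton] at this
        rcases ρ with _ | ⟨a, ρ⟩
        · exact absurd rfl hρne
        · simp at this
      · rintro q ⟨_, h2, _⟩
        simpa using h2
  refine ⟨T', ⟨htree', ?_⟩, ⟨hroot, rfl, ?_⟩, ?_⟩
  · intro π hπ
    have hne' := hmem_ne π hπ
    rw [hsuccs π hπ]
    have h1 := hπ.1
    refine ⟨p (π.map mk), ?_, ?_⟩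
    · have hlast : mk (p (π.map mk)) = mk (lastSt A π) := by
        rw [hp (π.map mk) h1]
        show (π.map mk).getLastD (mk A.ι) = _
        exact getLastD_map' mk π A.ι
      exact (eqv _ _ hlast).1
    · have := hP (π.map mk) h1
      simpa using this
  · intro ρ q hρne hpre
    have := hpre.length_le
    rcases ρ with _ | ⟨a, ρ⟩
    · exact absurd rfl hρne
    · simp at this
  · intro ξ hξ n
    have hbr : InfBranch T (fun i => mk (ξ i)) := by
      intro m
      have := (hξ m).1
      rwa [List.map_ofFn] at this
    obtain ⟨m, hm, hmα⟩ := hacc _ hbr n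
    obtain ⟨q, hqα, hq⟩ := hmα
    refine ⟨m, hm, q, hqα, ?_⟩
    have := eqv q (ξ m) hq
    exact ⟨this.1, this.2⟩
end

section
/- Let Q be a finite set, ≼_F a preorder on Q extended to paths in Q^+ componentwise (paths of equal length), and c ∈ ℕ. Then the relation ⊏ on c-bounded sequences of sets of paths is irreflexive and transitive, every c-bounded sequence S ≠ (∅,…,∅) satisfies S ⊏ (∅,…,∅), and there is no infinite ⊏-increasing chain of c-bounded sequences; consequently every maximal ⊏-increasing chain of c-bounded sequences terminates with a sequence all of whose members are the empty set. -/
variable {Q : Type*}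

/-- `P ≼_F^∀∃ P'` for sets of paths (paths are nonempty words over `Q`, compared
componentwise, in particular only paths of equal length are related). -/
def SetLe (F : Q → Q → Prop) (P P' : Set (List Q)) : Prop :=
  ∀ φ' ∈ P', ∃ φ ∈ P, List.Forall₂ F φ φ'

/-- `P ≺_F^∀∃ P'` : `P ≼_F^∀∃ P'` but not `P' ≼_F^∀∃ P`. -/
def SetLt (F : Q → Q → Prop) (P P' : Set (List Q)) : Prop :=
  SetLe F P P' ∧ ¬ SetLe F P' P

/-- `S ⊏ S'` for finite sequences of sets of paths: there is a position `k` (within both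
sequences) with `S_k ≺_F^∀∃ S'_k` and `S_j ≼_F^∀∃ S'_j` for all `j < k`. -/
def SeqLt (F : Q → Q → Prop) (S S' : List (Set (List Q))) : Prop :=
  ∃ k < min S.length S'.length,
    SetLt F (S.getD k ∅) (S'.getD k ∅) ∧
    ∀ j < k, SetLe F (S.getD j ∅) (S'.getD j ∅)

/-- A sequence of sets of paths is `c`-bounded if its length is at most `c` and every
path occurring in one of its members has length at most `c`. -/
def CBounded (c : ℕ) (S : List (Set (List Q))) : Prop :=
  S.length ≤ c ∧ ∀ X ∈ S, ∀ π ∈ X, π.length ≤ c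


section Aux


lemma forall₂_trans' {F : Q → Q → Prop} (ht : Transitive F) :
    ∀ {a b c : List Q}, List.Forall₂ F a b → List.Forall₂ F b c → List.Forall₂ F a c := by
  intro a b c hab
  induction hab generalizing c with
  | nil => intro h; cases h; exact List.Forall₂.nil
  | cons h _ ih =>
    intro h2; cases h2 with
    | cons h' t' => exact List.Forall₂.cons (ht h h') (ih t')

lemma finite_lists {α : Type*} {t : Set α} (htf : t.Finite) (n : ℕ) :
    {l : List α | l.length ≤ n ∧ ∀ x ∈ l, x ∈ t}.Finite := by
  have : Finite ↥t := htf
  apply Set.Finite.subset (Set.Finite.image (List.map Subtype.val)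
    (List.finite_length_le ↥t n))
  rintro l ⟨hlen, hmem⟩
  refine ⟨l.attach.map (fun x => ⟨x.1, hmem x.1 x.2⟩), by simpa, ?_⟩
  simp [List.map_map]

end Aux

section Main

variable {F : Q → Q → Prop}

lemma setLe_refl (hr : Reflexive F) (P : Set (List Q)) : SetLe F P P :=
  fun φ hφ => ⟨φ, hφ, List.forall₂_same.2 fun x _ => hr x⟩

lemma setLe_trans (ht : Transitive F) {P₁ P₂ P₃ : Set (List Q)}
    (h₁ : SetLe F P₁ P₂) (h₂ : SetLe F P₂ P₃) : SetLe F P₁ P₃ := by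
  intro φ hφ
  obtain ⟨ψ, hψ, hψφ⟩ := h₂ φ hφ
  obtain ⟨χ, hχ, hχψ⟩ := h₁ ψ hψ
  exact ⟨χ, hχ, forall₂_trans' ht hχψ hψφ⟩

lemma setLt_of_lt_of_le (ht : Transitive F) {P₁ P₂ P₃ : Set (List Q)}
    (h₁ : SetLt F P₁ P₂) (h₂ : SetLe F P₂ P₃) : SetLt F P₁ P₃ :=
  ⟨setLe_trans ht h₁.1 h₂, fun h => h₁.2 (setLe_trans ht h₂ h)⟩

lemma setLt_of_le_of_lt (ht : Transitive F) {P₁ P₂ P₃ : Set (List Q)}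
    (h₁ : SetLe F P₁ P₂) (h₂ : SetLt F P₂ P₃) : SetLt F P₁ P₃ :=
  ⟨setLe_trans ht h₁ h₂.1, fun h => h₂.2 (setLe_trans ht h h₁)⟩

lemma seqLt_irrefl (hr : Reflexive F) (S : List (Set (List Q))) : ¬ SeqLt F S S := by
  rintro ⟨k, _, hlt, _⟩
  exact hlt.2 (setLe_refl hr _)

lemma seqLt_trans (ht : Transitive F) {S₁ S₂ S₃ : List (Set (List Q))}
    (h₁₂ : SeqLt F S₁ S₂) (h₂₃ : SeqLt F S₂ S₃) : SeqLt F S₁ S₃ := by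
  obtain ⟨k₁, hk₁, hlt₁, hle₁⟩ := h₁₂
  obtain ⟨k₂, hk₂, hlt₂, hle₂⟩ := h₂₃
  refine ⟨min k₁ k₂, ?_, ?_, ?_⟩
  · omega
  · rcases lt_trichotomy k₁ k₂ with h | h | h
    · rw [min_eq_left h.le]
      exact setLt_of_lt_of_le ht hlt₁ (hle₂ _ h)
    · subst h; rw [min_self]
      exact setLt_of_lt_of_le ht hlt₁ hlt₂.1
    · rw [min_eq_right h.le]
      exact setLt_of_le_of_lt ht (hle₁ _ h) hlt₂
  · intro j hj
    exact setLe_trans ht (hle₁ j (lt_of_lt_of_le hj (min_le_left _ _)))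
      (hle₂ j (lt_of_lt_of_le hj (min_le_right _ _)))

end Main


section Main2

lemma getD_replicate_empty (n k : ℕ) :
    (List.replicate n (∅ : Set (List Q))).getD k ∅ = ∅ := by
  rcases lt_or_ge k n with h | h
  · rw [List.getD_eq_getElem _ _ (by simpa using h)]
    simp
  · rw [List.getD_eq_default _ _ (by simpa using h)]

lemma setLt_empty {F : Q → Q → Prop} {X : Set (List Q)} (hX : X ≠ ∅) :
    SetLt F X ∅ := by
  constructor
  · intro φ hφ; exact absurd hφ (Set.notMem_empty φ)
  · intro h
    obtain ⟨φ, hφ⟩ := Set.nonempty_iff_ne_empty.2 hX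
    obtain ⟨ψ, hψ, -⟩ := h φ hφ
    exact Set.notMem_empty ψ hψ

lemma seqLt_replicate {F : Q → Q → Prop} (hr : Reflexive F) {S : List (Set (List Q))}
    (hne : S ≠ List.replicate S.length ∅) :
    SeqLt F S (List.replicate S.length ∅) := by
  classical
  have hex : ∃ i, S.getD i ∅ ≠ ∅ := by
    by_contra hc
    push_neg at hc
    apply hne
    refine List.eq_replicate_iff.2 ⟨rfl, fun b hb => ?_⟩
    obtain ⟨i, hi, rfl⟩ := List.mem_iff_getElem.1 hb
    have := hc i
    rwa [List.getD_eq_getElem _ _ hi] at this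
  set k := Nat.find hex with hkdef
  have hk : S.getD k ∅ ≠ ∅ := Nat.find_spec hex
  have hklt : k < S.length := by
    by_contra h
    exact hk (List.getD_eq_default _ _ (Nat.not_lt.1 h))
  refine ⟨k, by simpa using hklt, ?_, ?_⟩
  · rw [getD_replicate_empty]
    exact setLt_empty hk
  · intro j hj
    rw [getD_replicate_empty, not_not.1 (Nat.find_min hex hj)]
    exact setLe_refl hr ∅

end Main2


lemma cbounded_finite [Finite Q] (c : ℕ) :
    {S : List (Set (List Q)) | CBounded c S}.Finite := by
  have hT : {π : List Q | π.length ≤ c}.Finite := List.finite_length_le Q c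
  have hA : {X : Set (List Q) | X ⊆ {π | π.length ≤ c}}.Finite := hT.finite_subsets
  apply (finite_lists hA c).subset
  rintro S ⟨h1, h2⟩
  exact ⟨h1, fun X hX π hπ => h2 X hX π hπ⟩

/-- For a preorder `F` on a finite set `Q` and a bound `c`: the relation `⊏` is
irreflexive and transitive on `c`-bounded sequences, every `c`-bounded sequence other
than `(∅,…,∅)` satisfies `S ⊏ (∅,…,∅)`, there is no infinite `⊏`-increasing chain of
`c`-bounded sequences, and consequently every `⊏`-maximal `c`-bounded sequence (the last
element of any maximal `⊏`-increasing chain) has all its members empty. -/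
theorem stmt_11 [Finite Q] (F : Q → Q → Prop)
    (hr : Reflexive F) (ht : Transitive F) (c : ℕ) :
    (∀ S : List (Set (List Q)), CBounded c S → ¬ SeqLt F S S) ∧
    (∀ S₁ S₂ S₃ : List (Set (List Q)), CBounded c S₁ → CBounded c S₂ → CBounded c S₃ →
      SeqLt F S₁ S₂ → SeqLt F S₂ S₃ → SeqLt F S₁ S₃) ∧
    (∀ S : List (Set (List Q)), CBounded c S → S ≠ List.replicate S.length ∅ →
      SeqLt F S (List.replicate S.length ∅)) ∧
    (¬ ∃ f : ℕ → List (Set (List Q)),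
      (∀ n, CBounded c (f n)) ∧ ∀ n, SeqLt F (f n) (f (n + 1))) ∧
    (∀ S : List (Set (List Q)), CBounded c S →
      (∀ S' : List (Set (List Q)), CBounded c S' → ¬ SeqLt F S S') →
      ∀ X ∈ S, X = ∅) := by
  refine ⟨fun S _ => seqLt_irrefl hr S,
    fun S₁ S₂ S₃ _ _ _ h₁ h₂ => seqLt_trans ht h₁ h₂,
    fun S _ hne => seqLt_replicate hr hne, ?_, ?_⟩
  · rintro ⟨f, hb, hchain⟩
    have hmono : ∀ m n, m < n → SeqLt F (f m) (f n) := by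
      intro m n h
      induction n with
      | zero => omega
      | succ n ih =>
        rcases Nat.lt_succ_iff_lt_or_eq.1 h with h' | h'
        · exact seqLt_trans ht (ih h') (hchain n)
        · subst h'; exact hchain m
    have hmaps : Set.MapsTo f Set.univ {S | CBounded c S} := fun n _ => hb n
    obtain ⟨m, -, n, -, hmn, heq⟩ :=
      Set.infinite_univ.exists_ne_map_eq_of_mapsTo hmaps (cbounded_finite c)
    rcases hmn.lt_or_gt with h | h
    · exact seqLt_irrefl hr (f m) (heq ▸ hmono m n h)
    · exact seqLt_irrefl hr (f n) (heq ▸ hmono n m h)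
  · intro S hS hmax X hX
    by_contra hXne
    have hne : S ≠ List.replicate S.length ∅ := fun h =>
      hXne (List.eq_of_mem_replicate (h ▸ hX))
    have hrep : CBounded c (List.replicate S.length (∅ : Set (List Q))) := by
      refine ⟨by simpa using hS.1, fun Y hY π hπ => ?_⟩
      rw [List.eq_of_mem_replicate hY] at hπ
      exact absurd hπ (Set.notMem_empty π)
    exact hmax _ hrep (seqLt_replicate hr hne)
end

section
/- Let A be an alternating Büchi automaton, ≼_F a reflexive and transitive forward simulation on A such that A is ≼_F-unambiguous, ≼_B a reflexive and transitive backward simulation on A parametrised by ≼_F, ≼_M a mediated preorder induced by ≼_F and ≼_B, and A+ the automaton extended according to ≼_M. Then for every partial run T of A+ on a word w ∈ Σ^ω, there exists a partial run U of A on w such that root(T) ≼_B root(U) and T ≼_{α+⇒α} U (for every branch ψ of U there is a branch π of T of the same length with π_i ∈ α+ ⇒ ψ_i ∈ α for all i). -/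
variable {σ Q : Type*}

/-- `A` is `≼_F`-unambiguous: no transition has two distinct forward-equivalent states
on its right-hand side. -/
def Unambiguous (A : ABA σ Q) (F : Q → Q → Prop) : Prop :=
  ∀ p a P, P ∈ A.δ p a → ∀ q ∈ P, ∀ r ∈ P, q ≠ r → ¬ (F q r ∧ F r q)

/-- `M` is a mediated preorder induced by the forward simulation `F` and the backward
simulation `B`: a preorder containing `F`, contained in `F ∘ B⁻¹` (existence of a
mediator), and forward extensible. -/
structure IsMediated (F B M : Q → Q → Prop) : Prop where
  refl : Reflexive M
  trans : Transitive M
  le_f : ∀ q r, F q r → M q r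
  mediator : ∀ q r, M q r → ∃ s, F q s ∧ B r s
  fwd_ext : ∀ q r s, M q r → F r s → M q s

/-- An extension function for the partial run `T`: it assigns to every branch `π` of `T`
a state `ext π ≼_M leaf(π)`. -/
def IsExtFun (A : ABA σ Q) (M : Q → Q → Prop) (T : Set (List Q))
    (ext : List Q → Q) : Prop :=
  ∀ π, IsBranch T π → M (ext π) (lastSt A π)

/-- `π ≼_ext ψ` : `ψ` strongly covers `π` w.r.t. `ext`. -/
def BrExt (A : ABA σ Q) (F : Q → Q → Prop) (ext : List Q → Q) (π ψ : List Q) : Prop :=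
  List.Forall₂ (αle A) π ψ ∧ F (ext π) (lastSt A ψ)

/-- `π ≼_w-ext ψ` : `ψ` weakly covers `π` w.r.t. `ext`. -/
def BrWExt (A : ABA σ Q) (M : Q → Q → Prop) (ext : List Q → Q) (π ψ : List Q) : Prop :=
  List.Forall₂ (αle A) π ψ ∧ M (ext π) (lastSt A ψ)

/-- `T ≼_ext U` : `U` strongly covers `T` w.r.t. `ext` (every branch of `U` strongly
covers some branch of `T`, and the root of `U` backward simulates the root of `T`). -/
def TrExt (A : ABA σ Q) (F B : Q → Q → Prop) (ext : List Q → Q)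
    (T U : Set (List Q)) : Prop :=
  (∀ ψ, IsBranch U ψ → ∃ π, IsBranch T π ∧ BrExt A F ext π ψ) ∧
  ∀ p r, [p] ∈ T → [r] ∈ U → B p r

/-- `T ≼_w-ext U` : `U` weakly covers `T` w.r.t. `ext`. -/
def TrWExt (A : ABA σ Q) (M B : Q → Q → Prop) (ext : List Q → Q)
    (T U : Set (List Q)) : Prop :=
  (∀ ψ, IsBranch U ψ → ∃ π, IsBranch T π ∧ BrWExt A M ext π ψ) ∧
  ∀ p r, [p] ∈ T → [r] ∈ U → B p r

/-- `sw_T(V)` : the tree of all nonempty prefixes of the strict weakly covering branches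
of `V` w.r.t. `T` and `ext` (branches of `V` strongly covering no branch of `T`). -/
def swT (A : ABA σ Q) (F : Q → Q → Prop) (ext : List Q → Q)
    (T V : Set (List Q)) : Set (List Q) :=
  {ρ | ρ ≠ [] ∧ ∃ ψ, IsBranch V ψ ∧ (¬ ∃ π, IsBranch T π ∧ BrExt A F ext π ψ) ∧ ρ <+: ψ}

namespace SfPf

theorem dropLast_getLastD {α} (l : List α) (d : α) (h : l ≠ []) :
    l.dropLast ++ [l.getLastD d] = l := by
  induction l generalizing d with
  | nil => simp at h
  | cons b bs ih =>
    cases bs with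
    | nil => simp
    | cons c cs =>
      have := ih c (by simp)
      simp only [List.dropLast_cons₂, List.getLastD_cons, List.cons_append]
      simp only [List.getLastD_cons] at this
      rw [this]

theorem forall₂_comp {α β γ : Type*} {R : α → β → Prop} {S : β → γ → Prop}
    {l₁ : List α} {l₂ : List β} {l₃ : List γ} (h₁ : List.Forall₂ R l₁ l₂)
    (h₂ : List.Forall₂ S l₂ l₃) (Tc : α → γ → Prop)
    (hT : ∀ a b c, R a b → S b c → Tc a c) : List.Forall₂ Tc l₁ l₃ := by
  induction h₁ generalizing l₃ with
  | nil => cases h₂; exact List.Forall₂.nil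
  | cons hab _ ih =>
    cases h₂ with
    | cons hbc htl => exact List.Forall₂.cons (hT _ _ _ hab hbc) (ih htl)

variable {Q : Type*}

inductive RT (Q : Type u) : Type u where
  | node : Q → List (RT Q) → RT Q

namespace RT

def root : RT Q → Q | node q _ => q

@[simp] theorem root_node (q : Q) (c : List (RT Q)) : root (node q c) = q := rfl

inductive InP : RT Q → List Q → Prop where
  | root (q : Q) (c : List (RT Q)) : InP (node q c) [q]
  | step {q : Q} {c : List (RT Q)} {t : RT Q} {p : List Q} :
      t ∈ c → InP t p → InP (node q c) (q :: p)

inductive InB : RT Q → List Q → Prop where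
  | leaf (q : Q) : InB (node q []) [q]
  | step {q : Q} {c : List (RT Q)} {t : RT Q} {p : List Q} :
      t ∈ c → InB t p → InB (node q c) (q :: p)

theorem InP.ne_nil {t : RT Q} {l : List Q} (h : InP t l) : l ≠ [] := by
  cases h <;> simp

theorem InP.head {t : RT Q} {l : List Q} (h : InP t l) : ∃ l', l = t.root :: l' := by
  cases h with
  | root q c => exact ⟨[], rfl⟩
  | step _ _ => exact ⟨_, rfl⟩

theorem InP.single {t : RT Q} {x : Q} (h : InP t [x]) : x = t.root := by
  cases h with
  | root q c => rfl
  | step hm hp => exact absurd rfl hp.ne_nil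

theorem InP.cons_elim {q q' : Q} {c : List (RT Q)} {l : List Q}
    (h : InP (node q c) (q' :: l)) :
    q' = q ∧ (l = [] ∨ ∃ t ∈ c, InP t l) := by
  cases h with
  | root _ _ => exact ⟨rfl, Or.inl rfl⟩
  | step hm hp => exact ⟨rfl, Or.inr ⟨_, hm, hp⟩⟩

theorem InB.toInP {t : RT Q} {l : List Q} (h : InB t l) : InP t l := by
  induction h with
  | leaf q => exact InP.root q []
  | step hm _ ih => exact InP.step hm ih

/-- run tree property, relative to offset `k` -/
inductive IsRn (A : ABA σ Q) (w : ℕ → σ) : RT Q → ℕ → Prop where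
  | mk (q : Q) (c : List (RT Q)) (k : ℕ) :
      (c = [] ∨ {x | ∃ t ∈ c, root t = x} ∈ A.δ q (w k)) →
      (∀ t₁ ∈ c, ∀ t₂ ∈ c, root t₁ = root t₂ → t₁ = t₂) →
      (∀ t ∈ c, IsRn A w t (k + 1)) → IsRn A w (node q c) k

end RT

end SfPf

namespace SfPf
namespace RT
variable {σ Q : Type*}

theorem getLastD_indep {p : List Q} (h : p ≠ []) (a b : Q) :
    p.getLastD a = p.getLastD b := by
  induction p generalizing a b with
  | nil => simp at h
  | cons x xs ih =>
    cases xs with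
    | nil => simp
    | cons y ys => simp only [List.getLastD_cons]

theorem InP.prefix {t : RT Q} {l ρ : List Q} (h : InP t l) (hp : ρ <+: l)
    (hρ : ρ ≠ []) : InP t ρ := by
  induction h generalizing ρ with
  | root q c =>
    obtain ⟨s, hs⟩ := hp
    cases ρ with
    | nil => simp at hρ
    | cons a as =>
      simp only [List.cons_append, List.cons.injEq] at hs
      obtain ⟨rfl, hs⟩ := hs
      have : as = [] := by
        cases as with
        | nil => rfl
        | cons b bs => simp at hs
      subst this; exact InP.root _ _
  | @step q c t p hm hP ih =>
    cases ρ with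
    | nil => simp at hρ
    | cons a as =>
      obtain ⟨rfl, has⟩ := List.cons_prefix_cons.mp hp
      cases as with
      | nil => exact InP.root _ _
      | cons b bs =>
        exact InP.step hm (ih has (by simp))

theorem paths_finite {A : ABA σ Q} {w : ℕ → σ} {t : RT Q} {k : ℕ}
    (h : IsRn A w t k) : {l | InP t l}.Finite := by
  induction h with
  | mk q c k hOr hinj hch ih =>
    have hsub : {l | InP (node q c) l} ⊆
        insert [q] (⋃ t ∈ {t | t ∈ c}, (fun p => q :: p) '' {l | InP t l}) := by
      intro l hl
      cases hl with
      | root => exact Set.mem_insert _ _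
      | step hm hp =>
        exact Set.mem_insert_of_mem _ (Set.mem_biUnion hm ⟨_, hp, rfl⟩)
    exact Set.Finite.subset
      (Set.Finite.insert _ (Set.Finite.biUnion (List.finite_toSet c)
        (fun t ht => Set.Finite.image _ (ih t ht)))) hsub

theorem succs_paths_cons {q : Q} {c : List (RT Q)} {t' : RT Q} {p : List Q}
    (hinj : ∀ t₁ ∈ c, ∀ t₂ ∈ c, root t₁ = root t₂ → t₁ = t₂)
    (hm : t' ∈ c) (hp : InP t' p) :
    succs {x | InP (node q c) x} (q :: p) = succs {x | InP t' x} p := by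
  ext x
  simp only [succs, Set.mem_setOf_eq, List.cons_append]
  constructor
  · intro hx
    obtain ⟨-, h⟩ := hx.cons_elim
    rcases h with h | ⟨t'', hm'', hP''⟩
    · exact absurd h (by simp [hp.ne_nil])
    · obtain ⟨l'', hl''⟩ := hP''.head
      obtain ⟨l', hl'⟩ := hp.head
      have hpn : p ≠ [] := hp.ne_nil
      have : root t'' = root t' := by
        cases p with
        | nil => simp at hpn
        | cons a as =>
          simp only [List.cons.injEq] at hl'
          simp only [List.cons_append, List.cons.injEq] at hl''
          rw [← hl''.1, ← hl'.1]
      rw [hinj t'' hm'' t' hm this] at hP''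
      exact hP''
  · intro hx
    exact InP.step hm hx

/-- the key structural lemma: a run tree's path-set behaves like a partial run -/
theorem succs_step {A : ABA σ Q} {w : ℕ → σ} (d : Q) :
    ∀ {t : RT Q} {l : List Q}, InP t l → ∀ {k : ℕ}, IsRn A w t k →
    (succs {x | InP t x} l = ∅ ∨
      succs {x | InP t x} l ∈ A.δ (l.getLastD d) (w (k + l.length - 1))) ∧
    (succs {x | InP t x} l = ∅ → InB t l) := by
  intro t l hl
  induction hl with
  | root q c =>
    intro k hr
    cases hr with
    | mk _ _ _ hOr hinj hch =>
      have hsucc : succs {x | InP (node q c) x} [q] = {x | ∃ t ∈ c, root t = x} := by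
        ext x
        simp only [succs, Set.mem_setOf_eq, List.singleton_append]
        constructor
        · intro hx
          obtain ⟨-, h⟩ := hx.cons_elim
          rcases h with h | ⟨t'', hm'', hP''⟩
          · simp at h
          · exact ⟨t'', hm'', (hP''.single).symm⟩
        · rintro ⟨t'', hm'', rfl⟩
          cases t'' with
          | node q'' c'' => exact InP.step hm'' (InP.root q'' c'')
      rcases hOr with rfl | hδ
      · refine ⟨Or.inl (by simp [hsucc]), fun _ => InB.leaf q⟩
      · refine ⟨Or.inr ?_, fun h0 => ?_⟩
        · simpa [hsucc] using hδ
        · rw [hsucc] at h0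
          cases c with
          | nil => exact InB.leaf q
          | cons t₀ ts =>
            exact absurd h0 (Set.nonempty_iff_ne_empty.mp ⟨root t₀, t₀, by simp⟩)
  | @step q c t' p hm hp ih =>
    intro k hr
    cases hr with
    | mk _ _ _ hOr hinj hch =>
      have hrw := succs_paths_cons (q := q) hinj hm hp
      have hr' := hch t' hm
      have hih := ih hr'
      have hlen : p.length ≠ 0 := by simpa using hp.ne_nil
      have harith : k + 1 + p.length - 1 = k + (q :: p).length - 1 := by
        simp only [List.length_cons]
        omega
      have hlast : p.getLastD d = (q :: p).getLastD d := by
        rw [List.getLastD_cons]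
        exact getLastD_indep (by simpa using hlen) d q
      constructor
      · rcases hih.1 with h | h
        · exact Or.inl (by rw [hrw]; exact h)
        · refine Or.inr ?_
          rw [hrw, ← hlast, ← harith]
          exact h
      · intro h0
        rw [hrw] at h0
        exact InB.step hm (hih.2 h0)

end RT
end SfPf

namespace SfPf
namespace RT
variable {σ Q : Type*}

instance instNonemptyRT [Nonempty Q] : Nonempty (RT Q) :=
  ⟨node (Classical.arbitrary Q) []⟩

theorem InB.node_elim {q : Q} {c : List (RT Q)} {ψ : List Q}
    (h : InB (node q c) ψ) :
    (c = [] ∧ ψ = [q]) ∨ ∃ t ∈ c, ∃ p, ψ = q :: p ∧ InB t p := by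
  cases h with
  | leaf => exact Or.inl ⟨rfl, rfl⟩
  | step hm hp => exact Or.inr ⟨_, hm, _, rfl, hp⟩

/-- forward-simulation copy of a run tree -/
theorem copy {A : ABA σ Q} {w : ℕ → σ} [Finite Q] [Nonempty Q]
    (hne : A.NoEmpty) {F : Q → Q → Prop} (hF : ForwardSim A F) :
    ∀ {t : RT Q} {k : ℕ}, IsRn A w t k → ∀ u : Q, F t.root u →
    ∃ t' : RT Q, t'.root = u ∧ IsRn A w t' k ∧
      ∀ ψ, InB t' ψ → ∃ ρ, InB t ρ ∧ List.Forall₂ F ρ ψ := by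
  intro t k h
  induction h with
  | mk q c k hOr hinj hch ih =>
    intro u hu
    rcases hOr with rfl | hS
    · refine ⟨node u [], rfl, IsRn.mk u [] k (Or.inl rfl) (by simp) (by simp), ?_⟩
      intro ψ hψ
      cases hψ with
      | leaf => exact ⟨[q], InB.leaf q, List.Forall₂.cons hu List.Forall₂.nil⟩
      | step hm _ => simp at hm
    · obtain ⟨R, hR, hRcov⟩ := (hF q u hu).2 (w k) _ hS
      have hx : ∀ v : Q, ∃ t' : RT Q, v ∈ R → (t'.root = v ∧ IsRn A w t' (k + 1) ∧
          ∀ ψ, InB t' ψ → ∃ ρ, (∃ tt ∈ c, InB tt ρ) ∧ List.Forall₂ F ρ ψ) := by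
        intro v
        by_cases hv : v ∈ R
        · obtain ⟨p', ⟨tt, htt, hroot⟩, hFp⟩ := hRcov v hv
          obtain ⟨t', h1, h2, h3⟩ := ih tt htt v (by rw [hroot]; exact hFp)
          exact ⟨t', fun _ => ⟨h1, h2, fun ψ hψ =>
            (h3 ψ hψ).imp fun ρ hρ => ⟨⟨tt, htt, hρ.1⟩, hρ.2⟩⟩⟩
        · exact ⟨Classical.arbitrary _, fun h => absurd h hv⟩
      choose f hf using hx
      have hRfin : R.Finite := Set.toFinite R
      set L := hRfin.toFinset.toList with hL
      have hmemL : ∀ v, v ∈ L ↔ v ∈ R := by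
        intro v; rw [hL, Finset.mem_toList, Set.Finite.mem_toFinset]
      refine ⟨node u (L.map f), rfl, ?_, ?_⟩
      · refine IsRn.mk u (L.map f) k (Or.inr ?_) ?_ ?_
        · have : {x | ∃ t ∈ L.map f, root t = x} = R := by
            ext x
            simp only [Set.mem_setOf_eq, List.mem_map]
            constructor
            · rintro ⟨t', ⟨v, hv, rfl⟩, rfl⟩
              have := (hf v ((hmemL v).mp hv)).1
              rw [this]; exact (hmemL v).mp hv
            · intro hx
              exact ⟨f x, ⟨x, (hmemL x).mpr hx, rfl⟩, (hf x hx).1⟩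
          rw [this]; exact hR
        · rintro t₁ ht₁ t₂ ht₂ hroot
          obtain ⟨v₁, hv₁, rfl⟩ := List.mem_map.mp ht₁
          obtain ⟨v₂, hv₂, rfl⟩ := List.mem_map.mp ht₂
          have e₁ := (hf v₁ ((hmemL v₁).mp hv₁)).1
          have e₂ := (hf v₂ ((hmemL v₂).mp hv₂)).1
          rw [e₁, e₂] at hroot
          rw [hroot]
        · rintro t' ht'
          obtain ⟨v, hv, rfl⟩ := List.mem_map.mp ht'
          exact (hf v ((hmemL v).mp hv)).2.1
      · intro ψ hψ
        rcases hψ.node_elim with ⟨hc0, rfl⟩ | ⟨t', hm, p, rfl, hp⟩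
        · exfalso
          have hRne : R.Nonempty := Set.nonempty_iff_ne_empty.mpr
            (fun h => hne u (w k) (h ▸ hR))
          obtain ⟨v, hv⟩ := hRne
          have : f v ∈ L.map f := List.mem_map.mpr ⟨v, (hmemL v).mpr hv, rfl⟩
          rw [hc0] at this
          simp at this
        · obtain ⟨v, hv, rfl⟩ := List.mem_map.mp hm
          obtain ⟨ρ, ⟨tt, htt, httB⟩, hF₂⟩ := (hf v ((hmemL v).mp hv)).2.2 p hp
          exact ⟨q :: ρ, InB.step htt httB, List.Forall₂.cons hu hF₂⟩

end RT
end SfPf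

namespace SfPf
open RT
variable {σ Q : Type*}

theorem leaf_case [Finite Q] [Nonempty Q]
    {A : ABA σ Q} {F B M : Q → Q → Prop} {w : ℕ → σ} {T : Set (List Q)}
    (hF : ForwardSim A F) (hBr : Reflexive B) (hM : IsMediated F B M)
    (hT : IsPartialRun (extABA A M) w T)
    (π : List Q) (hπ : π ∈ T) (hsucc : succs T π = ∅)
    (y : Q) (hcert : ∀ x, M x (π.getLastD A.ι) → M x y) :
    ∃ t : RT Q, B y t.root ∧ IsRn A w t (π.length - 1) ∧
      ∀ ψ, InB t ψ → ∃ ρ, IsBranch T (π.dropLast ++ ρ) ∧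
        List.Forall₂ (fun p r => p ∈ (extABA A M).α → r ∈ A.α) ρ ψ := by
  have hπne : π ≠ [] := fun h => hT.tree.not_nil (h ▸ hπ)
  have hπeq : π.dropLast ++ [π.getLastD A.ι] = π := dropLast_getLastD π A.ι hπne
  by_cases hα : π.getLastD A.ι ∈ (extABA A M).α
  · obtain ⟨q₀, hq₀α, hq₀g, hgq₀⟩ := hα
    obtain ⟨s₁, hFs₁, hBs₁⟩ := hM.mediator q₀ y (hcert q₀ hq₀g)
    refine ⟨node s₁ [], hBs₁, IsRn.mk s₁ [] _ (Or.inl rfl) (by simp) (by simp), ?_⟩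
    intro ψ hψ
    rcases hψ.node_elim with ⟨-, rfl⟩ | ⟨t', hm, p, rfl, hp⟩
    · refine ⟨[π.getLastD A.ι], by rw [hπeq]; exact ⟨hπ, hsucc⟩, ?_⟩
      exact List.Forall₂.cons (fun _ => (hF q₀ s₁ hFs₁).1 hq₀α) List.Forall₂.nil
    · simp at hm
  · refine ⟨node y [], hBr y, IsRn.mk y [] _ (Or.inl rfl) (by simp) (by simp), ?_⟩
    intro ψ hψ
    rcases hψ.node_elim with ⟨-, rfl⟩ | ⟨t', hm, p, rfl, hp⟩
    · refine ⟨[π.getLastD A.ι], by rw [hπeq]; exact ⟨hπ, hsucc⟩, ?_⟩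
      exact List.Forall₂.cons (fun hg => absurd hg hα) List.Forall₂.nil
    · simp at hm

end SfPf

namespace SfPf
open RT
variable {σ Q : Type*}

theorem main_rec [Finite Q] [Nonempty Q]
    {A : ABA σ Q} {F B M : Q → Q → Prop} {w : ℕ → σ} {T : Set (List Q)}
    (hne : A.NoEmpty)
    (hFr : Reflexive F) (hFt : Transitive F) (hF : ForwardSim A F)
    (hunamb : Unambiguous A F)
    (hBr : Reflexive B) (hBt : Transitive B) (hB : BackwardSim A F B)
    (hM : IsMediated F B M)
    (hT : IsPartialRun (extABA A M) w T) :
    ∀ n : ℕ, ∀ π : List Q, π ∈ T →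
      (∀ π' ∈ T, π <+: π' → π'.length ≤ π.length + n) →
      ∀ y : Q, (∀ x, M x (π.getLastD A.ι) → M x y) →
      ∃ t : RT Q, B y t.root ∧ IsRn A w t (π.length - 1) ∧
        ∀ ψ, InB t ψ → ∃ ρ, IsBranch T (π.dropLast ++ ρ) ∧
          List.Forall₂ (fun p r => p ∈ (extABA A M).α → r ∈ A.α) ρ ψ := by
  intro n
  induction n with
  | zero =>
    intro π hπ hbound y hcert
    by_cases hE : succs T π = ∅
    · exact leaf_case hF hBr hM hT π hπ hE y hcert
    · exfalso
      have hstep := (hT.step π hπ).resolve_left hE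
      obtain ⟨p, hpM, hpS⟩ := hstep
      have hSne : (succs T π).Nonempty := by
        rcases Set.eq_empty_or_nonempty (succs T π) with h | h
        · exact absurd h hE
        · exact h
      obtain ⟨c, hc⟩ := hSne
      have hmem : π ++ [c] ∈ T := hc
      have := hbound (π ++ [c]) hmem ⟨[c], rfl⟩
      simp at this
  | succ n ih =>
    intro π hπ hbound y hcert
    by_cases hE : succs T π = ∅
    · exact leaf_case hF hBr hM hT π hπ hE y hcert
    have hπne : π ≠ [] := fun h => hT.tree.not_nil (h ▸ hπ)
    have hπlen : 1 ≤ π.length := List.length_pos_iff.mpr hπne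
    have hπeq : π.dropLast ++ [π.getLastD A.ι] = π := dropLast_getLastD π A.ι hπne
    obtain ⟨p, hpM, hpS⟩ := (hT.step π hπ).resolve_left hE
    have hpM' : M p (π.getLastD A.ι) := hpM
    -- step A
    obtain ⟨s₁, hBys₁, hps₁, hs₁α⟩ : ∃ s₁, B y s₁ ∧ M p s₁ ∧
        (π.getLastD A.ι ∈ (extABA A M).α → s₁ ∈ A.α) := by
      by_cases hα : π.getLastD A.ι ∈ (extABA A M).α
      · obtain ⟨q₀, hq₀α, hq₀g, hgq₀⟩ := hα
        obtain ⟨s₁, hFs₁, hBs₁⟩ := hM.mediator q₀ y (hcert q₀ hq₀g)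
        exact ⟨s₁, hBs₁, hM.fwd_ext p q₀ s₁ (hM.trans hpM' hgq₀) hFs₁,
          fun _ => (hF q₀ s₁ hFs₁).1 hq₀α⟩
      · exact ⟨y, hBr y, hcert p hpM', fun hg => absurd hg hα⟩
    -- step B
    obtain ⟨s₂, hFps₂, hBs₁s₂⟩ := hM.mediator p s₁ hps₁
    have hs₂α : π.getLastD A.ι ∈ (extABA A M).α → s₂ ∈ A.α :=
      fun hg => (hB s₁ s₂ hBs₁s₂).2.1 (hs₁α hg)
    -- step C : fire
    obtain ⟨R, hR, hRcov⟩ := (hF p s₂ hFps₂).2 (w (π.length - 1)) (succs T π) hpS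
    -- the loop
    have LOOP : ∀ m : ℕ, ∀ z : Q, ∀ ch : List (RT Q), ∀ W : Set Q,
        ({u | ∃ x ∈ W, F x u}).ncard ≤ m →
        ({x | ∃ t ∈ ch, RT.root t = x} ∪ W) ∈ A.δ z (w (π.length - 1)) →
        (π.getLastD A.ι ∈ (extABA A M).α → z ∈ A.α) →
        (∀ t₁ ∈ ch, ∀ t₂ ∈ ch, RT.root t₁ = RT.root t₂ → t₁ = t₂) →
        (∀ t ∈ ch, IsRn A w t (π.length - 1 + 1) ∧
          ∀ ψ, InB t ψ → ∃ ρ, IsBranch T (π ++ ρ) ∧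
            List.Forall₂ (fun p r => p ∈ (extABA A M).α → r ∈ A.α) ρ ψ) →
        (∀ u ∈ W, ∃ c ∈ succs T π, F c u) →
        ∃ t : RT Q, B z t.root ∧ IsRn A w t (π.length - 1) ∧
          ∀ ψ, InB t ψ → ∃ ρ, IsBranch T (π.dropLast ++ ρ) ∧
            List.Forall₂ (fun p r => p ∈ (extABA A M).α → r ∈ A.α) ρ ψ := by
      have FIN : ∀ z : Q, ∀ ch : List (RT Q),
          ({x | ∃ t ∈ ch, RT.root t = x} : Set Q) ∈ A.δ z (w (π.length - 1)) →
          (π.getLastD A.ι ∈ (extABA A M).α → z ∈ A.α) →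
          (∀ t₁ ∈ ch, ∀ t₂ ∈ ch, RT.root t₁ = RT.root t₂ → t₁ = t₂) →
          (∀ t ∈ ch, IsRn A w t (π.length - 1 + 1) ∧
            ∀ ψ, InB t ψ → ∃ ρ, IsBranch T (π ++ ρ) ∧
              List.Forall₂ (fun p r => p ∈ (extABA A M).α → r ∈ A.α) ρ ψ) →
          ∃ t : RT Q, B z t.root ∧ IsRn A w t (π.length - 1) ∧
            ∀ ψ, InB t ψ → ∃ ρ, IsBranch T (π.dropLast ++ ρ) ∧
              List.Forall₂ (fun p r => p ∈ (extABA A M).α → r ∈ A.α) ρ ψ := by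
        intro z ch hRW hzα hinj hch
        have hchne : ch ≠ [] := by
          rintro rfl
          have h0 : ({x | ∃ t ∈ ([] : List (RT Q)), RT.root t = x} : Set Q) = ∅ := by simp
          rw [h0] at hRW
          exact hne z _ hRW
        refine ⟨node z ch, hBr z,
          IsRn.mk z ch _ (Or.inr hRW) hinj (fun t ht => (hch t ht).1), ?_⟩
        intro ψ hψ
        rcases hψ.node_elim with ⟨hc0, -⟩ | ⟨tc, htc, ψc, rfl, hψc⟩
        · exact absurd hc0 hchne
        obtain ⟨ρc, hbrc, hF₂c⟩ := (hch tc htc).2 ψc hψc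
        refine ⟨π.getLastD A.ι :: ρc, ?_, List.Forall₂.cons (fun hg => hzα hg) hF₂c⟩
        rw [show π.dropLast ++ π.getLastD A.ι :: ρc = (π.dropLast ++ [π.getLastD A.ι]) ++ ρc by simp, hπeq]
        exact hbrc
      intro m
      induction m with
      | zero =>
        intro z ch W hm hRW hzα hinj hch hW
        have hWsub : W ⊆ {u | ∃ x ∈ W, F x u} := fun x hx => ⟨x, hx, hFr x⟩
        have h0 : {u | ∃ x ∈ W, F x u} = ∅ := by
          have := Set.ncard_eq_zero (Set.toFinite _) |>.mp (Nat.le_zero.mp hm)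
          exact this
        have hW0 : W = ∅ := Set.subset_eq_empty (h0 ▸ hWsub) rfl
        rw [hW0, Set.union_empty] at hRW
        exact FIN z ch hRW hzα hinj hch
      | succ m ihm =>
        intro z ch W hm hRW hzα hinj hch hW
        rcases Set.eq_empty_or_nonempty W with rfl | hWne
        · rw [Set.union_empty] at hRW
          exact FIN z ch hRW hzα hinj hch
        · have htrr : Transitive (fun a b : Q => F a b ∧ ¬ F b a) :=
            fun a b c hab hbc => ⟨hFt hab.1 hbc.1, fun hca => hbc.2 (hFt hca hab.1)⟩
          haveI iT : IsTrans Q (fun a b : Q => F a b ∧ ¬ F b a) := ⟨fun a b c hab hbc => htrr hab hbc⟩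
          haveI iI : IsIrrefl Q (fun a b : Q => F a b ∧ ¬ F b a) := ⟨fun a h => h.2 h.1⟩
          obtain ⟨y', hy'W, hmin⟩ :=
            (Finite.wellFounded_of_trans_of_irrefl
              (fun a b : Q => F a b ∧ ¬ F b a)).has_min W hWne
          obtain ⟨c, hcS, hcy'⟩ := hW y' hy'W
          have hπc : π ++ [c] ∈ T := hcS
          have hbound' : ∀ π' ∈ T, (π ++ [c]) <+: π' → π'.length ≤ (π ++ [c]).length + n := by
            intro π' hπ' hpre
            have h1 := hbound π' hπ' ((π.prefix_append [c]).trans hpre)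
            simp only [List.length_append, List.length_cons, List.length_nil] at *
            omega
          have hcert' : ∀ x, M x ((π ++ [c]).getLastD A.ι) → M x y' := by
            intro x hx
            have hgl : (π ++ [c]).getLastD A.ι = c := by simp
            rw [hgl] at hx
            exact hM.fwd_ext x c y' hx hcy'
          obtain ⟨t₀, hBy't₀, hRn₀, hCov₀⟩ := ih (π ++ [c]) hπc hbound' y' hcert'
          have hk1 : (π ++ [c]).length - 1 = π.length - 1 + 1 := by
            simp only [List.length_append, List.length_cons, List.length_nil]
            omega
          rw [hk1] at hRn₀
          have hdrop : (π ++ [c]).dropLast = π := List.dropLast_concat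
          rw [hdrop] at hCov₀
          have hy'R : y' ∈ ({x | ∃ t ∈ ch, RT.root t = x} ∪ W) := Or.inr hy'W
          have hins : insert y' (({x | ∃ t ∈ ch, RT.root t = x} ∪ W) \ {y'})
              ∈ A.δ z (w (π.length - 1)) := by
            rw [Set.insert_diff_singleton, Set.insert_eq_self.mpr hy'R]
            exact hRW
          obtain ⟨s', R'', hnR'', htr', hBzs', hcov'⟩ :=
            (hB y' t₀.root hBy't₀).2.2 (w (π.length - 1)) z _ (by simp) hins
          have hGc : ∀ u : Q, ∃ t' : RT Q, (u ∈ R'' ∧ ∃ tt ∈ ch, F (RT.root tt) u) →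
              (RT.root t' = u ∧ IsRn A w t' (π.length - 1 + 1) ∧
               ∀ ψ, InB t' ψ → ∃ ρ, IsBranch T (π ++ ρ) ∧
                 List.Forall₂ (fun p r => p ∈ (extABA A M).α → r ∈ A.α) ρ ψ) := by
            intro u
            by_cases hu : u ∈ R'' ∧ ∃ tt ∈ ch, F (RT.root tt) u
            · obtain ⟨hu1, tt, htt, hFu⟩ := hu
              obtain ⟨t', h1, h2, h3⟩ := copy hne hF (hch tt htt).1 u hFu
              refine ⟨t', fun _ => ⟨h1, h2, ?_⟩⟩
              intro ψ hψ
              obtain ⟨ρψ, hρB, hF₂F⟩ := h3 ψ hψ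
              obtain ⟨ρ, hbr, hαρ⟩ := (hch tt htt).2 ρψ hρB
              exact ⟨ρ, hbr, forall₂_comp hαρ hF₂F _
                (fun a b c hab hbc ha => (hF b c hbc).1 (hab ha))⟩
            · exact ⟨Classical.arbitrary _, fun h => absurd h hu⟩
          choose f hf using hGc
          set G : Set Q := {u | u ∈ R'' ∧ ∃ tt ∈ ch, F (RT.root tt) u} with hGdef
          have hGsub : G ⊆ R'' := fun u hu => hu.1
          set L : List Q := (Set.toFinite G).toFinset.toList with hLdef
          have hmemL : ∀ v, v ∈ L ↔ v ∈ G := by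
            intro v
            rw [hLdef, Finset.mem_toList, Set.Finite.mem_toFinset]
          have hroots : {x | ∃ t ∈ (t₀ :: L.map f), RT.root t = x} =
              insert (RT.root t₀) G := by
            ext x
            simp only [Set.mem_setOf_eq, List.mem_cons, List.mem_map, Set.mem_insert_iff]
            constructor
            · rintro ⟨t, (rfl | ⟨v, hv, rfl⟩), rfl⟩
              · exact Or.inl rfl
              · exact Or.inr (by rw [(hf v ((hmemL v).mp hv)).1]; exact (hmemL v).mp hv)
            · rintro (rfl | hxG)
              · exact ⟨t₀, Or.inl rfl, rfl⟩
              · exact ⟨f x, Or.inr ⟨x, (hmemL x).mpr hxG, rfl⟩, (hf x hxG).1⟩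
          have htrset : {x | ∃ t ∈ (t₀ :: L.map f), RT.root t = x} ∪ (R'' \ G) =
              insert (RT.root t₀) R'' := by
            rw [hroots]
            ext x
            simp only [Set.mem_union, Set.mem_insert_iff, Set.mem_diff]
            constructor
            · rintro ((rfl | hG) | ⟨hR, -⟩)
              · exact Or.inl rfl
              · exact Or.inr (hGsub hG)
              · exact Or.inr hR
            · rintro (rfl | hR)
              · exact Or.inl (Or.inl rfl)
              · by_cases hg : x ∈ G
                · exact Or.inl (Or.inr hg)
                · exact Or.inr ⟨hR, hg⟩
          have hsub1 : {u | ∃ x ∈ (R'' \ G), F x u} ⊆ {u | ∃ x ∈ W \ {y'}, F x u} := by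
            rintro v ⟨u, hu, hFuv⟩
            obtain ⟨x, hx, hFxu⟩ := hcov' u hu.1
            rcases hx.1 with hxr | hxW
            · refine absurd ?_ hu.2
              obtain ⟨tt, htt, hroot⟩ := hxr
              exact ⟨hu.1, tt, htt, hroot ▸ hFxu⟩
            · exact ⟨x, ⟨hxW, hx.2⟩, hFt hFxu hFuv⟩
          have hy'in : y' ∈ {u | ∃ x ∈ W, F x u} := ⟨y', hy'W, hFr y'⟩
          have hy'out : y' ∉ {u | ∃ x ∈ W \ {y'}, F x u} := by
            rintro ⟨x, ⟨hxW, hxny⟩, hFxy⟩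
            have hxny' : x ≠ y' := by simpa using hxny
            have hFyx : F y' x := by
              by_contra hno
              exact hmin x hxW ⟨hFxy, hno⟩
            exact hunamb z (w (π.length - 1)) _ hRW x (Or.inr hxW) y' (Or.inr hy'W)
              hxny' ⟨hFxy, hFyx⟩
          have hss : {u | ∃ x ∈ W \ {y'}, F x u} ⊂ {u | ∃ x ∈ W, F x u} := by
            constructor
            · rintro v ⟨x, hx, hfv⟩
              exact ⟨x, hx.1, hfv⟩
            · intro hsup
              exact hy'out (hsup hy'in)
          have hmeas : ({u | ∃ x ∈ (R'' \ G), F x u}).ncard ≤ m := by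
            have h1 := Set.ncard_le_ncard hsub1 (Set.toFinite _)
            have h2 := Set.ncard_lt_ncard hss (Set.toFinite _)
            omega
          have hinj' : ∀ t₁ ∈ (t₀ :: L.map f), ∀ t₂ ∈ (t₀ :: L.map f),
              RT.root t₁ = RT.root t₂ → t₁ = t₂ := by
            intro t₁ ht₁ t₂ ht₂ hr
            rcases List.mem_cons.mp ht₁ with rfl | h₁ <;>
              rcases List.mem_cons.mp ht₂ with rfl | h₂
            · rfl
            · obtain ⟨v, hv, rfl⟩ := List.mem_map.mp h₂
              have hvG := (hmemL v).mp hv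
              rw [(hf v hvG).1] at hr
              exact absurd (hr ▸ hGsub hvG) hnR''
            · obtain ⟨v, hv, rfl⟩ := List.mem_map.mp h₁
              have hvG := (hmemL v).mp hv
              rw [(hf v hvG).1] at hr
              exact absurd (hr ▸ hGsub hvG) hnR''
            · obtain ⟨v₁, hv₁, rfl⟩ := List.mem_map.mp h₁
              obtain ⟨v₂, hv₂, rfl⟩ := List.mem_map.mp h₂
              have h1 := (hf v₁ ((hmemL v₁).mp hv₁)).1
              have h2 := (hf v₂ ((hmemL v₂).mp hv₂)).1
              rw [h1, h2] at hr
              rw [hr]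
          have hch' : ∀ t ∈ (t₀ :: L.map f), IsRn A w t (π.length - 1 + 1) ∧
              ∀ ψ, InB t ψ → ∃ ρ, IsBranch T (π ++ ρ) ∧
                List.Forall₂ (fun p r => p ∈ (extABA A M).α → r ∈ A.α) ρ ψ := by
            intro t ht
            rcases List.mem_cons.mp ht with rfl | h₁
            · exact ⟨hRn₀, hCov₀⟩
            · obtain ⟨v, hv, rfl⟩ := List.mem_map.mp h₁
              exact ⟨(hf v ((hmemL v).mp hv)).2.1, (hf v ((hmemL v).mp hv)).2.2⟩
          have hW' : ∀ u ∈ (R'' \ G), ∃ c' ∈ succs T π, F c' u := by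
            intro u hu
            obtain ⟨x, hx, hFxu⟩ := hcov' u hu.1
            rcases hx.1 with hxr | hxW
            · refine absurd ?_ hu.2
              obtain ⟨tt, htt, hroot⟩ := hxr
              exact ⟨hu.1, tt, htt, hroot ▸ hFxu⟩
            · obtain ⟨c'', hS, hFc''⟩ := hW x hxW
              exact ⟨c'', hS, hFt hFc'' hFxu⟩
          obtain ⟨t, hBs't, hrn, hcov⟩ := ihm s' (t₀ :: L.map f) (R'' \ G) hmeas
            (by rw [htrset]; exact htr')
            (fun hg => (hB z s' hBzs').2.1 (hzα hg)) hinj' hch' hW'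
          exact ⟨t, hBt hBzs' hBs't, hrn, hcov⟩
    -- initialize the loop
    have init := LOOP ({u | ∃ x ∈ R, F x u}).ncard s₂ [] R le_rfl
      (by simpa using hR) hs₂α (by simp) (by simp) hRcov
    obtain ⟨t, hBs₂t, hrn, hcov⟩ := init
    exact ⟨t, hBt (hBt hBys₁ hBs₁s₂) hBs₂t, hrn, hcov⟩

end SfPf


/-- For every partial run `T` of `A⁺` on `w` there is a partial run `U` of `A` on `w`
with `root(T) ≼_B root(U)` and `T ≼_{α⁺⇒α} U` : every branch `ψ` of `U` has a branch `π`
of `T` of the same length with `π_i ∈ α⁺ ⇒ ψ_i ∈ α` componentwise. -/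
theorem stmt_14 [Finite σ] [Finite Q] (A : ABA σ Q) (hne : A.NoEmpty)
    (F B M : Q → Q → Prop)
    (hFr : Reflexive F) (hFt : Transitive F) (hF : ForwardSim A F)
    (hunamb : Unambiguous A F)
    (hBr : Reflexive B) (hBt : Transitive B) (hB : BackwardSim A F B)
    (hM : IsMediated F B M)
    (w : ℕ → σ) (T : Set (List Q)) (hT : IsPartialRun (extABA A M) w T) :
    ∃ U : Set (List Q), IsPartialRun A w U ∧
      (∀ p r, [p] ∈ T → [r] ∈ U → B p r) ∧
      ∀ ψ, IsBranch U ψ → ∃ π, IsBranch T π ∧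
        List.Forall₂ (fun p r => p ∈ (extABA A M).α → r ∈ A.α) π ψ := by
  classical
  obtain ⟨q0, hq0, huniq⟩ := hT.tree.root
  haveI : Nonempty Q := ⟨q0⟩
  obtain ⟨b, hb⟩ := (hT.finite.image List.length).bddAbove
  have hbound : ∀ π' ∈ T, ([q0] : List Q) <+: π' → π'.length ≤ ([q0] : List Q).length + b := by
    intro π' hπ' _
    have := hb (Set.mem_image_of_mem List.length hπ')
    simp only [List.length_cons, List.length_nil]
    omega
  have hcert : ∀ x, M x (([q0] : List Q).getLastD A.ι) → M x q0 := by
    intro x hx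
    simpa using hx
  obtain ⟨t, hBroot, hrn, hcov⟩ :=
    SfPf.main_rec hne hFr hFt hF hunamb hBr hBt hB hM hT b [q0] hq0 hbound q0 hcert
  simp only [List.length_cons, List.length_nil, Nat.add_sub_cancel] at hrn
  refine ⟨{l | SfPf.RT.InP t l}, ⟨⟨?_, ?_, ?_⟩, SfPf.RT.paths_finite hrn, ?_⟩, ?_, ?_⟩
  · intro h
    exact (SfPf.RT.InP.ne_nil h) rfl
  · intro l hl ρ hpre hρ
    exact SfPf.RT.InP.prefix hl hpre hρ
  · refine ⟨t.root, ?_, fun y hy => SfPf.RT.InP.single hy⟩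
    cases t with
    | node q c => exact SfPf.RT.InP.root q c
  · intro l hl
    have hkey := (SfPf.RT.succs_step A.ι hl hrn).1
    simp only [Nat.zero_add] at hkey
    exact hkey
  · intro p r h1 h2
    have hp : p = q0 := huniq p h1
    have hr : r = t.root := SfPf.RT.InP.single h2
    rw [hp, hr]
    exact hBroot
  · intro ψ hψ
    have hbψ : SfPf.RT.InB t ψ := (SfPf.RT.succs_step A.ι hψ.1 hrn).2 hψ.2
    obtain ⟨ρ, hbr, hF2⟩ := hcov ψ hbψ
    exact ⟨ρ, by simpa using hbr, hF2⟩
end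

section
/- Let A be an alternating Büchi automaton and let T be a run of A (on some word w ∈ Σ^ω) with root(T) = ι. Then T is accepting if and only if for every π ∈ T there exists a constant k_π ∈ ℕ such that every path ψ ∈ Q^+ with πψ ∈ T and |ψ| ≥ k_π contains an accepting state. -/
variable {σ Q : Type*}

/-!
If some `π ∈ T` had arbitrarily long extensions `ψ` avoiding `α`, these would form an infinite
prefix-closed set of words over the finite alphabet `Q`, so by König's lemma there would be an
infinite `α`-free continuation of `π` in `T`, contradicting acceptance. Conversely, along an
infinite branch, the bound `k` attached to the prefix of length `n + 1` forces an accepting state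
among the next `k + 1` positions.
-/

theorem List.ofFn_seq_add (ξ : ℕ → Q) (m n : ℕ) :
    (List.ofFn fun i : Fin (m + n) => ξ i) =
      (List.ofFn fun i : Fin m => ξ i) ++ List.ofFn fun i : Fin n => ξ (m + i) := by
  rw [List.ofFn_add]
  rfl

theorem List.ofFn_seq_prefix (ξ : ℕ → Q) {m n : ℕ} (h : m ≤ n) :
    (List.ofFn fun i : Fin m => ξ i) <+: List.ofFn fun i : Fin n => ξ i := by
  obtain ⟨k, rfl⟩ := Nat.exists_eq_add_of_le h
  rw [List.ofFn_seq_add]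
  exact List.prefix_append _ _

def seqAppend (π : List Q) (ξ : ℕ → Q) (i : ℕ) : Q :=
  if h : i < π.length then π[i] else ξ (i - π.length)

theorem ofFn_seqAppend (π : List Q) (ξ : ℕ → Q) (n : ℕ) :
    (List.ofFn fun i : Fin (π.length + n) => seqAppend π ξ i) =
      π ++ List.ofFn fun i : Fin n => ξ i := by
  rw [List.ofFn_seq_add]
  congr 1
  · conv_rhs => rw [← List.ofFn_getElem (xs := π)]
    simp [seqAppend]
  · simp [seqAppend]

section Konig

variable [Finite Q] {S : Set (List Q)}

theorem exists_extension_infinite_of_infinite {ψ : List Q}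
    (h : {φ | ψ ++ φ ∈ S}.Infinite) : ∃ q, {φ | ψ ++ [q] ++ φ ∈ S}.Infinite := by
  by_contra! hfin
  refine h (((Set.finite_iUnion fun q => (hfin q).image (List.cons q)).insert []).subset ?_)
  rintro (_ | ⟨q, φ⟩) hφ
  · exact Set.mem_insert _ _
  · exact Set.mem_insert_of_mem _ (Set.mem_iUnion.2 ⟨q, φ, by simpa using hφ, rfl⟩)

theorem exists_seq_forall_ofFn_mem_of_infinite (hS : ∀ ψ ∈ S, ∀ ρ, ρ <+: ψ → ρ ∈ S)
    (hinf : S.Infinite) : ∃ ξ : ℕ → Q, ∀ n, (List.ofFn fun i : Fin n => ξ i) ∈ S := by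
  let Good : Set (List Q) := {ψ | {φ | ψ ++ φ ∈ S}.Infinite}
  choose next hnext using fun ψ : Good => exists_extension_infinite_of_infinite ψ.2
  let L : ℕ → Good := fun n => Nat.rec ⟨[], by simpa [Good] using hinf⟩
    (fun _ ψ => ⟨ψ.1 ++ [next ψ], hnext ψ⟩) n
  refine ⟨fun n => next (L n), fun n => ?_⟩
  have hL : (L n).1 = List.ofFn fun i : Fin n => next (L i) := by
    induction n with
    | zero => rfl
    | succ n ih => simp only [List.ofFn_succ_last, Fin.val_castSucc, Fin.val_last, ← ih]; rfl
  obtain ⟨φ, hφ⟩ := (L n).2.nonempty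
  exact hL ▸ hS _ hφ _ (List.prefix_append _ _)

end Konig

theorem exists_infBranch_of_unbounded [Finite Q] {T : Set (List Q)} (hT : IsTree T)
    {π : List Q} (hπ : π ∈ T) {P : Set Q}
    (h : ∀ k, ∃ ψ, π ++ ψ ∈ T ∧ k ≤ ψ.length ∧ ∀ q ∈ ψ, q ∈ P) :
    ∃ ξ, InfBranch T ξ ∧ ∀ m ≥ π.length, ξ m ∈ P := by
  have hπne : π ≠ [] := fun h => hT.not_nil (h ▸ hπ)
  let S : Set (List Q) := {ψ | π ++ ψ ∈ T ∧ ∀ q ∈ ψ, q ∈ P}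
  have hS : ∀ ψ ∈ S, ∀ ρ, ρ <+: ψ → ρ ∈ S := by
    rintro ψ ⟨hψT, hψP⟩ ρ hρ
    exact ⟨hT.prefix_closed _ hψT _ ((List.prefix_append_right_inj π).2 hρ) (by simp [hπne]),
      fun q hq => hψP q (hρ.subset hq)⟩
  have hinf : S.Infinite := by
    intro hfin
    obtain ⟨N, hN⟩ := (hfin.image List.length).bddAbove
    obtain ⟨ψ, hψT, hψlen, hψP⟩ := h (N + 1)
    have := hN ⟨ψ, ⟨hψT, hψP⟩, rfl⟩
    omega
  obtain ⟨ξ, hξ⟩ := exists_seq_forall_ofFn_mem_of_infinite hS hinf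
  refine ⟨seqAppend π ξ, fun n => ?_, fun m hm => ?_⟩
  · have hpre := List.ofFn_seq_prefix (seqAppend π ξ) (show n + 1 ≤ π.length + (n + 1) by omega)
    rw [ofFn_seqAppend] at hpre
    exact hT.prefix_closed _ (hξ (n + 1)).1 _ hpre (by simp)
  · have := (hξ (m - π.length + 1)).2 (ξ (m - π.length)) (List.mem_ofFn.2 ⟨Fin.last _, rfl⟩)
    simpa [seqAppend, Nat.not_lt.2 hm] using this

variable {A : ABA σ Q} {T : Set (List Q)}

theorem exists_bound_of_accepting [Finite Q] (hT : IsTree T) (hacc : Accepting A T) :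
    ∀ π ∈ T, ∃ k : ℕ, ∀ ψ : List Q, ψ ≠ [] → π ++ ψ ∈ T → k ≤ ψ.length →
      ∃ q ∈ A.α, q ∈ ψ := by
  intro π hπ
  by_contra! hfree
  obtain ⟨ξ, hbranch, hξ⟩ := exists_infBranch_of_unbounded hT hπ (P := A.αᶜ) fun k => by
    obtain ⟨ψ, -, hψT, hψlen, hψ⟩ := hfree k
    exact ⟨ψ, hψT, hψlen, fun q hq hqα => hψ q hqα hq⟩
  obtain ⟨m, hm, hmα⟩ := hacc ξ hbranch π.length
  exact hξ m hm hmα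

theorem accepting_of_forall_exists_bound
    (h : ∀ π ∈ T, ∃ k : ℕ, ∀ ψ : List Q, ψ ≠ [] → π ++ ψ ∈ T → k ≤ ψ.length →
      ∃ q ∈ A.α, q ∈ ψ) : Accepting A T := by
  intro ξ hξ n
  obtain ⟨k, hk⟩ := h _ (hξ n)
  have hpath := hξ (n + 1 + k)
  rw [show n + 1 + k + 1 = n + 1 + (k + 1) by omega, List.ofFn_seq_add] at hpath
  obtain ⟨q, hqα, hq⟩ := hk _ (by simp) hpath (by simp)
  obtain ⟨i, rfl⟩ := List.mem_ofFn.1 hq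
  exact ⟨n + 1 + i, by omega, hqα⟩

theorem stmt_15_general [Finite Q] (A : ABA σ Q)
    (w : ℕ → σ) (T : Set (List Q)) (hT : IsRun A w T) :
    Accepting A T ↔
      ∀ π ∈ T, ∃ k : ℕ, ∀ ψ : List Q, ψ ≠ [] → π ++ ψ ∈ T → k ≤ ψ.length →
        ∃ q ∈ A.α, q ∈ ψ :=
  ⟨exists_bound_of_accepting hT.tree, accepting_of_forall_exists_bound⟩

/-- A run `T` of `A` rooted at `ι` is accepting iff for every `π ∈ T` there is a
constant `k_π` such that every path `ψ ∈ Q⁺` with `πψ ∈ T` and `|ψ| ≥ k_π` contains an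
accepting state. -/
theorem stmt_15 [Finite σ] [Finite Q] (A : ABA σ Q) (hne : A.NoEmpty)
    (w : ℕ → σ) (T : Set (List Q)) (hT : IsRun A w T) (hroot : [A.ι] ∈ T) :
    Accepting A T ↔
      ∀ π ∈ T, ∃ k : ℕ, ∀ ψ : List Q, ψ ≠ [] → π ++ ψ ∈ T → k ≤ ψ.length →
        ∃ q ∈ A.α, q ∈ ψ :=
  stmt_15_general A w T hT
end
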